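/- arXiv:2105.01801 — 5 statements merged into one kernel-verified Lean document; each statement's English description precedes it below -/
import Mathlib

section
/- The SE mechanism is restricted-faithful: for matroidal valuations P = (v_1,…,v_n), any agent i, any A ∈ cLD(P), any X ⊆ A_i, and any A'' ∈ cLD(P'') where P'' = (v_1,…,v_i|X,…,v_n), it holds that v_i(X) + p_i ≤ v_i(A''_i) + p''_i, where p and p'' are the SE subsidy vectors for A under P and for A'' under P'' respectively. -/
/-!
For matroidal valuations a clean allocation has utilities equal to bundle sizes, and two clean
allocations `C`, `D` with `|C α| < |D α|` are linked by an augmenting path moving goods of `D`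
into `C` (matroid augmentation). If `C` is Lorenz dominating, such a path cannot create value
and can only take a good from an agent with at most one more good than `α`; with exactly one
more it merely swaps two bundle sizes. Playing an allocation of cLD(P) against one of cLD(P'') in this
way, each swap keeps both Lorenz dominating, keeps the size of `i`, and brings the two strictly
closer, so no configuration can always admit another swap. Hence some allocation of cLD(P'')
gives `i` all of `X`, every one gives `i` at least `|X| - 1` goods, and if `|A i|` is minimal
over cLD(P) (as it is when `p_i = 1`) every one gives `i` exactly `|X|` goods and, when some
agent has more than `|A i|` goods in `A`, gives some agent more than `|X|`. The inequality
follows by cases on `|A'' i| ∈ {|X| - 1, |X|}`.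
-/

open Finset

/-- A matroidal valuation on the goods `Fin m`: a monotone submodular function
with `v ∅ = 0` whose marginal gains lie in `{0,1}`. -/
structure Matroidal (m : ℕ) where
  v : Finset (Fin m) → ℕ
  v_empty : v ∅ = 0
  mono : ∀ ⦃X Y : Finset (Fin m)⦄, X ⊆ Y → v X ≤ v Y
  submodular : ∀ X Y : Finset (Fin m), v (X ∪ Y) + v (X ∩ Y) ≤ v X + v Y
  marginal : ∀ (X : Finset (Fin m)) (e : Fin m), v (insert e X) ≤ v X + 1

/-- An allocation: the bundles are pairwise disjoint. -/
def IsAllocation {n m : ℕ} (A : Fin n → Finset (Fin m)) : Prop :=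
  ∀ i j : Fin n, i ≠ j → Disjoint (A i) (A j)

/-- An allocation is clean (for matroidal valuations) iff each bundle is independent. -/
def Clean {n m : ℕ} (P : Fin n → Matroidal m) (A : Fin n → Finset (Fin m)) : Prop :=
  ∀ i, (P i).v (A i) = (A i).card

/-- A utilitarian optimal allocation. -/
def UtilOpt {n m : ℕ} (P : Fin n → Matroidal m) (A : Fin n → Finset (Fin m)) : Prop :=
  IsAllocation A ∧ ∀ B : Fin n → Finset (Fin m), IsAllocation B →
    ∑ i, (P i).v (B i) ≤ ∑ i, (P i).v (A i)

/-- The sum of the `k` smallest entries of `u`, as the minimum of all `k`-subset sums. -/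
noncomputable def kSmallestSum {n : ℕ} (u : Fin n → ℕ) (k : ℕ) : ℕ :=
  sInf {s | ∃ S : Finset (Fin n), S.card = k ∧ s = ∑ i ∈ S, u i}

/-- `A` is Lorenz dominating: it is an allocation that Lorenz dominates every allocation. -/
def LorenzDominating {n m : ℕ} (P : Fin n → Matroidal m) (A : Fin n → Finset (Fin m)) : Prop :=
  IsAllocation A ∧ ∀ B : Fin n → Finset (Fin m), IsAllocation B →
    ∀ k ≤ n, kSmallestSum (fun i => (P i).v (B i)) k ≤ kSmallestSum (fun i => (P i).v (A i)) k

/-- The set of clean Lorenz dominating allocations. -/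
def cLD {n m : ℕ} (P : Fin n → Matroidal m) : Set (Fin n → Finset (Fin m)) :=
  {A | Clean P A ∧ LorenzDominating P A}

/-- `min_{B ∈ cLD(P)} |B_i|`. -/
noncomputable def minSize {n m : ℕ} (P : Fin n → Matroidal m) (i : Fin n) : ℕ :=
  sInf {c | ∃ A ∈ cLD P, c = (A i).card}

/-- `max_{B ∈ cLD(P)} |B_i|`. -/
noncomputable def maxSize {n m : ℕ} (P : Fin n → Matroidal m) (i : Fin n) : ℕ :=
  sSup {c | ∃ A ∈ cLD P, c = (A i).card}

/-- The SE subsidy for agent `i` under allocation `A` and profile `P`. -/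
noncomputable def sePay {n m : ℕ} (P : Fin n → Matroidal m) (A : Fin n → Finset (Fin m))
    (i : Fin n) : ℕ :=
  if (A i).card = minSize P i ∧ (A i).card < Finset.univ.sup (fun j => (A j).card) then 1 else 0

/-- Restriction of a matroidal valuation to a set `X`. -/
def Matroidal.restrict {m : ℕ} (w : Matroidal m) (X : Finset (Fin m)) : Matroidal m where
  v Y := w.v (X ∩ Y)
  v_empty := by simp [w.v_empty]
  mono := fun {Y Z} h => w.mono (Finset.inter_subset_inter le_rfl h)
  submodular := fun Y Z => by
    have h := w.submodular (X ∩ Y) (X ∩ Z)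
    have h1 : X ∩ (Y ∪ Z) = (X ∩ Y) ∪ (X ∩ Z) := Finset.inter_union_distrib_left X Y Z
    have h2 : X ∩ (Y ∩ Z) = (X ∩ Y) ∩ (X ∩ Z) := by
      ext a; simp [Finset.mem_inter]; tauto
    simpa [h1, h2] using h
  marginal := fun Y e => by
    by_cases he : e ∈ X
    · have h1 : X ∩ insert e Y = insert e (X ∩ Y) := by
        ext a
        simp only [Finset.mem_inter, Finset.mem_insert]
        constructor
        · rintro ⟨ha, h⟩
          rcases h with rfl | hb
          · exact Or.inl rfl
          · exact Or.inr ⟨ha, hb⟩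
        · rintro (rfl | ⟨ha, hb⟩)
          · exact ⟨he, Or.inl rfl⟩
          · exact ⟨ha, Or.inr hb⟩
      simpa [h1] using w.marginal (X ∩ Y) e
    · have h1 : X ∩ insert e Y = X ∩ Y := by
        ext a
        simp only [Finset.mem_inter, Finset.mem_insert]
        constructor
        · rintro ⟨ha, (rfl | hb)⟩
          · exact absurd ha he
          · exact ⟨ha, hb⟩
        · rintro ⟨ha, hb⟩; exact ⟨ha, Or.inr hb⟩
      simp only [h1]
      exact Nat.le_succ _

open scoped symmDiff

namespace Matroidal

variable {m : ℕ} (w : Matroidal m)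

def Indep (S : Finset (Fin m)) : Prop := w.v S = S.card

lemma v_union_le_add_card (T U : Finset (Fin m)) : w.v (T ∪ U) ≤ w.v T + U.card := by
  induction U using Finset.induction_on with
  | empty => simp
  | insert a U ha ih =>
    rw [Finset.union_insert, Finset.card_insert_of_notMem ha]
    exact (w.marginal _ a).trans (by omega)

lemma v_le_card (S : Finset (Fin m)) : w.v S ≤ S.card := by
  simpa [w.v_empty] using w.v_union_le_add_card ∅ S

variable {w}

lemma Indep.subset {S T : Finset (Fin m)} (hS : w.Indep S) (hT : T ⊆ S) : w.Indep T := by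
  have h := w.v_union_le_add_card T (S \ T)
  rw [Finset.union_sdiff_of_subset hT, hS, Finset.card_sdiff_of_subset hT] at h
  have := Finset.card_le_card hT
  have := w.v_le_card T
  unfold Indep
  omega

lemma indep_insert_iff {S : Finset (Fin m)} {e : Fin m} (hS : w.Indep S) (he : e ∉ S) :
    w.Indep (insert e S) ↔ w.v (insert e S) = w.v S + 1 := by
  rw [Indep, Finset.card_insert_of_notMem he, hS]

variable (w) in
lemma v_union_eq_of_forall_v_insert_eq {C D : Finset (Fin m)}
    (h : ∀ e ∈ D, w.v (insert e C) = w.v C) : w.v (C ∪ D) = w.v C := by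
  induction D using Finset.induction_on with
  | empty => simp
  | insert a D _ ih =>
    have hCD := ih fun e he => h e (Finset.mem_insert_of_mem he)
    have hsub := w.submodular (C ∪ D) (insert a C)
    rw [show C ∪ D ∪ insert a C = C ∪ insert a D by grind, h a (Finset.mem_insert_self a D),
      hCD] at hsub
    have := w.mono (show C ⊆ (C ∪ D) ∩ insert a C by grind)
    have := w.mono (show C ⊆ C ∪ insert a D from Finset.subset_union_left)
    omega

lemma Indep.exists_insert_of_card_lt {C D : Finset (Fin m)} (hC : w.Indep C) (hD : w.Indep D)
    (h : C.card < D.card) : ∃ e ∈ D, e ∉ C ∧ w.Indep (insert e C) := by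
  by_contra! hcon
  have hgain : ∀ e ∈ D, w.v (insert e C) = w.v C := by
    intro e he
    by_cases heC : e ∈ C
    · rw [Finset.insert_eq_self.2 heC]
    · have := (indep_insert_iff hC heC).not.1 (hcon e he heC)
      have := w.marginal C e
      have := w.mono (Finset.subset_insert e C)
      omega
  have := w.v_union_eq_of_forall_v_insert_eq hgain
  have := w.mono (Finset.subset_union_right (s₁ := C) (s₂ := D))
  unfold Indep at hC hD
  omega

lemma indep_restrict_iff {X Y : Finset (Fin m)} :
    (w.restrict X).Indep Y ↔ Y ⊆ X ∧ w.Indep Y := by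
  change w.v (X ∩ Y) = Y.card ↔ _
  constructor
  · intro h
    have := w.v_le_card (X ∩ Y)
    have hXY : X ∩ Y = Y := Finset.eq_of_subset_of_card_le Finset.inter_subset_right
      (by omega)
    exact ⟨hXY ▸ Finset.inter_subset_left, by rwa [hXY] at h⟩
  · rintro ⟨hYX, hY⟩
    rwa [Finset.inter_eq_right.2 hYX]

variable (w) in
lemma restrict_restrict_self (X : Finset (Fin m)) : (w.restrict X).restrict X = w.restrict X := by
  simp only [restrict, ← Finset.inter_assoc, Finset.inter_self]

end Matroidal

section kSmallestSum

variable {n : ℕ}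

lemma kSmallestSum_le_sum (u : Fin n → ℕ) (S : Finset (Fin n)) :
    kSmallestSum u S.card ≤ ∑ i ∈ S, u i :=
  Nat.sInf_le ⟨S, rfl, rfl⟩

lemma kSmallestSum_add_le_sum_add (u : Fin n → ℕ) {S : Finset (Fin n)} {j l : Fin n}
    (hj : j ∈ S) (hl : l ∉ S) : kSmallestSum u S.card + u j ≤ ∑ i ∈ S, u i + u l := by
  have hl' : l ∉ S.erase j := fun h => hl (Finset.mem_of_mem_erase h)
  have := kSmallestSum_le_sum u (insert l (S.erase j))
  rw [Finset.card_insert_of_notMem hl', Finset.card_erase_add_one hj,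
    Finset.sum_insert hl'] at this
  have := Finset.sum_erase_add _ u hj
  omega

lemma exists_kSmallestSum_eq (u : Fin n → ℕ) {k : ℕ} (hk : k ≤ n) :
    ∃ S : Finset (Fin n), S.card = k ∧ kSmallestSum u k = ∑ i ∈ S, u i := by
  obtain ⟨S, -, hS⟩ := Finset.exists_subset_card_eq (s := (Finset.univ : Finset (Fin n)))
    (n := k) (by simpa using hk)
  obtain ⟨S, hS, h⟩ := Nat.sInf_mem (s := {s | ∃ S : Finset (Fin n), S.card = k ∧
    s = ∑ i ∈ S, u i}) ⟨_, S, hS, rfl⟩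
  exact ⟨S, hS, h⟩

lemma kSmallestSum_self (u : Fin n → ℕ) : kSmallestSum u n = ∑ i, u i := by
  obtain ⟨S, hS, h⟩ := exists_kSmallestSum_eq u le_rfl
  rwa [Finset.eq_univ_of_card S (by simpa using hS)] at h

lemma kSmallestSum_pred_add_sup (u : Fin n → ℕ) (hn : 0 < n) :
    kSmallestSum u (n - 1) + Finset.univ.sup u = ∑ i, u i := by
  have hne : (Finset.univ : Finset (Fin n)).Nonempty := Finset.univ_nonempty_iff.2 ⟨⟨0, hn⟩⟩
  obtain ⟨j, -, hj⟩ := Finset.exists_mem_eq_sup _ hne u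
  apply le_antisymm
  · have := kSmallestSum_le_sum u (Finset.univ.erase j)
    rw [Finset.card_erase_of_mem (Finset.mem_univ j), Finset.card_univ, Fintype.card_fin] at this
    rw [hj, ← Finset.sum_erase_add _ _ (Finset.mem_univ j)]
    omega
  · obtain ⟨S, hS, h⟩ := exists_kSmallestSum_eq u (Nat.sub_le n 1)
    obtain ⟨l, hl⟩ : ∃ l, l ∉ S := by
      by_contra! hc
      have := Finset.card_le_card (fun x _ => hc x : Finset.univ ⊆ S)
      simp only [Finset.card_univ, Fintype.card_fin] at this
      omega
    have huniv : insert l S = Finset.univ :=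
      Finset.eq_univ_of_card _ (by rw [Finset.card_insert_of_notMem hl, Fintype.card_fin]; omega)
    have hsum : ∑ i, u i = u l + ∑ i ∈ S, u i := by rw [← huniv, Finset.sum_insert hl]
    rw [hsum, h]
    have := Finset.le_sup (f := u) (Finset.mem_univ l)
    omega

lemma kSmallestSum_comp_perm (u : Fin n → ℕ) (σ : Equiv.Perm (Fin n)) (k : ℕ) :
    kSmallestSum (u ∘ σ) k = kSmallestSum u k := by
  unfold kSmallestSum
  congr 1
  ext s
  constructor
  · rintro ⟨S, hS, rfl⟩
    exact ⟨S.map σ.toEmbedding, by simpa using hS, by simp⟩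
  · rintro ⟨S, hS, rfl⟩
    exact ⟨S.map σ.symm.toEmbedding, by simpa using hS, by simp [Finset.sum_map]⟩

def IsTransfer (x y : Fin n → ℕ) (a b : Fin n) : Prop :=
  y a = x a + 1 ∧ x b = y b + 1 ∧ ∀ j, j ≠ a → j ≠ b → y j = x j

namespace IsTransfer

variable {x y : Fin n → ℕ} {a b : Fin n}

lemma apply_left (h : IsTransfer x y a b) : y a = x a + 1 := h.1

lemma apply_right (h : IsTransfer x y a b) : x b = y b + 1 := h.2.1

lemma apply_of_ne (h : IsTransfer x y a b) {j : Fin n} (hja : j ≠ a) (hjb : j ≠ b) :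
    y j = x j :=
  h.2.2 j hja hjb

lemma ne (h : IsTransfer x y a b) : a ≠ b := by
  rintro rfl
  have := h.1; have := h.2.1
  omega

lemma trans {z : Fin n → ℕ} {c : Fin n} (h : IsTransfer x y a b) (h' : IsTransfer y z b c)
    (hac : a ≠ c) : IsTransfer x z a c := by
  have hab := h.ne
  have hbc := h'.ne
  obtain ⟨ha, hb, hoth⟩ := h
  obtain ⟨hb', hc', hoth'⟩ := h'
  refine ⟨?_, ?_, fun j hja hjc => ?_⟩
  · rw [hoth' a hab hac]; exact ha
  · rw [← hoth c (Ne.symm hac) (Ne.symm hbc)]; exact hc'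
  · by_cases hjb : j = b
    · subst hjb; omega
    · rw [hoth' j hjb hjc, hoth j hja hjb]

lemma sum_add_ite (h : IsTransfer x y a b) (S : Finset (Fin n)) :
    ∑ j ∈ S, y j + (if b ∈ S then 1 else 0) =
      ∑ j ∈ S, x j + (if a ∈ S then 1 else 0) := by
  have hab := h.ne
  obtain ⟨ha, hb, hoth⟩ := h
  rw [← Finset.sum_ite_eq' S b (fun _ => 1), ← Finset.sum_ite_eq' S a (fun _ => 1),
    ← Finset.sum_add_distrib, ← Finset.sum_add_distrib]
  refine Finset.sum_congr rfl fun j _ => ?_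
  by_cases hja : j = a
  · subst hja; simp [hab, ha]
  · by_cases hjb : j = b
    · subst hjb; simp [hja, hb]
    · simp [hja, hjb, hoth j hja hjb]

lemma sum_eq (h : IsTransfer x y a b) : ∑ j, y j = ∑ j, x j := by
  simpa using h.sum_add_ite Finset.univ

lemma eq_comp_swap (h : IsTransfer x y a b) (hab : x b = x a + 1) :
    y = x ∘ Equiv.swap a b := by
  obtain ⟨ha, hb, hoth⟩ := h
  funext j
  by_cases hja : j = a
  · subst hja; rw [Function.comp_apply, Equiv.swap_apply_left]; omega
  · by_cases hjb : j = b
    · subst hjb; rw [Function.comp_apply, Equiv.swap_apply_right]; omega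
    · simp [Equiv.swap_apply_of_ne_of_ne hja hjb, hoth j hja hjb]

/-- Take `k` to be the number of coordinates `j` with `x j ≤ x a`: every `k`-set gains under the
transfer, since a `k`-set containing `b`, or missing `a`, can be improved for `x` by an exchange. -/
lemma exists_kSmallestSum_lt (h : IsTransfer x y a b) (hgap : x a + 2 ≤ x b) :
    ∃ k ≤ n, kSmallestSum x k < kSmallestSum y k := by
  set T := Finset.univ.filter fun j => x j ≤ x a
  have haT : a ∈ T := by simp [T]
  have hbT : b ∉ T := by simp only [T, Finset.mem_filter, Finset.mem_univ, true_and]; omega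
  have hTn : T.card ≤ n := by simpa using Finset.card_le_univ T
  have key : ∀ S : Finset (Fin n), S.card = T.card →
      kSmallestSum x S.card < ∑ i ∈ S, y i := by
    intro S hS
    have hshift := h.sum_add_ite S
    by_cases hbS : b ∈ S
    · obtain ⟨j, hjT, hjS⟩ : ∃ j ∈ T, j ∉ S := by
        by_contra! hc
        exact hbT (Finset.eq_of_subset_of_card_le hc hS.le ▸ hbS)
      have := kSmallestSum_add_le_sum_add x hbS hjS
      have : x j ≤ x a := (Finset.mem_filter.1 hjT).2
      split_ifs at hshift <;> omega
    by_cases haS : a ∈ S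
    · have := kSmallestSum_le_sum x S
      simp only [hbS, haS, if_true, if_false] at hshift
      omega
    obtain ⟨j, hjS, hjT⟩ : ∃ j ∈ S, j ∉ T := by
      by_contra! hc
      exact haS (Finset.eq_of_subset_of_card_le hc hS.ge ▸ haT)
    have := kSmallestSum_add_le_sum_add x hjS haS
    have : x a < x j := by simpa [T] using hjT
    simp only [hbS, haS, if_false] at hshift
    omega
  obtain ⟨S, hS, hSy⟩ := exists_kSmallestSum_eq y hTn
  exact ⟨T.card, hTn, hSy ▸ hS ▸ key S hS⟩

end IsTransfer

end kSmallestSum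

section Allocation

variable {n m : ℕ}

lemma Clean.indep {P : Fin n → Matroidal m} {C : Fin n → Finset (Fin m)} (hC : Clean P C)
    (j : Fin n) : (P j).Indep (C j) :=
  hC j

abbrev restrictProfile (P : Fin n → Matroidal m) (i : Fin n) (X : Finset (Fin m)) :
    Fin n → Matroidal m :=
  Function.update P i ((P i).restrict X)

lemma restrictProfile_restrictProfile (P : Fin n → Matroidal m) (i : Fin n)
    (X : Finset (Fin m)) : restrictProfile (restrictProfile P i X) i X = restrictProfile P i X := by
  simp [Matroidal.restrict_restrict_self]

lemma clean_restrictProfile_iff {P : Fin n → Matroidal m} {i : Fin n} {X : Finset (Fin m)}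
    {C : Fin n → Finset (Fin m)} :
    Clean (restrictProfile P i X) C ↔ Clean P C ∧ C i ⊆ X := by
  constructor
  · intro hC
    have hi := hC i
    simp only [Function.update_self] at hi
    refine ⟨fun j => ?_, (Matroidal.indep_restrict_iff.1 hi).1⟩
    by_cases hj : j = i
    · subst hj; exact (Matroidal.indep_restrict_iff.1 hi).2
    · simpa [Function.update_of_ne hj] using hC j
  · rintro ⟨hC, hCi⟩ j
    by_cases hj : j = i
    · subst hj
      simpa [Matroidal.Indep] using Matroidal.indep_restrict_iff.2 ⟨hCi, hC.indep j⟩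
    · simpa [Function.update_of_ne hj] using hC j

lemma IsAllocation.update_of_subset {C : Fin n → Finset (Fin m)} (hC : IsAllocation C)
    {i : Fin n} {X : Finset (Fin m)} (hX : X ⊆ C i) : IsAllocation (Function.update C i X) := by
  intro p q hpq
  have hsub : ∀ j, Function.update C i X j ⊆ C j := fun j => by
    by_cases hj : j = i
    · subst hj; simpa using hX
    · simp [Function.update_of_ne hj]
  exact (hC p q hpq).mono (hsub p) (hsub q)

lemma Clean.update_restrictProfile {P : Fin n → Matroidal m} {C : Fin n → Finset (Fin m)}
    (hC : Clean P C) {i : Fin n} {X : Finset (Fin m)} (hX : X ⊆ C i) :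
    Clean (restrictProfile P i X) (Function.update C i X) := by
  refine clean_restrictProfile_iff.2 ⟨fun j => ?_, by simp⟩
  by_cases hj : j = i
  · subst hj; simpa [Matroidal.Indep] using (hC.indep j).subset hX
  · simpa [Function.update_of_ne hj] using hC j

def giveTo (C : Fin n → Finset (Fin m)) (α : Fin n) (e : Fin m) : Fin n → Finset (Fin m) :=
  fun j => if j = α then insert e (C j) else (C j).erase e

section giveTo

variable {C : Fin n → Finset (Fin m)} {α : Fin n} {e : Fin m}

@[simp] lemma giveTo_self : giveTo C α e α = insert e (C α) := by simp [giveTo]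

lemma giveTo_of_ne {j : Fin n} (hj : j ≠ α) : giveTo C α e j = (C j).erase e := by
  simp [giveTo, hj]

lemma IsAllocation.giveTo (hC : IsAllocation C) : IsAllocation (giveTo C α e) := by
  intro p q hpq
  by_cases hp : p = α
  · subst hp
    rw [giveTo_self, giveTo_of_ne (Ne.symm hpq), Finset.disjoint_insert_left]
    exact ⟨Finset.notMem_erase e _, (hC p q hpq).mono_right (Finset.erase_subset e _)⟩
  · rw [giveTo_of_ne hp]
    by_cases hq : q = α
    · subst hq
      rw [giveTo_self, Finset.disjoint_insert_right]
      exact ⟨Finset.notMem_erase e _, (hC p q hpq).mono_left (Finset.erase_subset e _)⟩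
    · rw [giveTo_of_ne hq]
      exact (hC p q hpq).mono (Finset.erase_subset e _) (Finset.erase_subset e _)

lemma Clean.giveTo {Q : Fin n → Matroidal m} (hC : Clean Q C)
    (he : (Q α).Indep (insert e (C α))) : Clean Q (giveTo C α e) := by
  intro j
  by_cases hj : j = α
  · subst hj; rw [giveTo_self]; exact he
  · rw [giveTo_of_ne hj]; exact (hC.indep j).subset (Finset.erase_subset e _)

lemma sum_card_giveTo (he : ∀ j, e ∉ C j) :
    ∑ j, (giveTo C α e j).card = ∑ j, (C j).card + 1 := by
  rw [← Finset.sum_erase_add _ _ (Finset.mem_univ α), ← Finset.sum_erase_add _ _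
    (Finset.mem_univ α), giveTo_self, Finset.card_insert_of_notMem (he α), ← add_assoc]
  congr 2
  refine Finset.sum_congr rfl fun j hj => ?_
  rw [giveTo_of_ne (Finset.ne_of_mem_erase hj), Finset.erase_eq_of_notMem (he j)]

lemma isTransfer_giveTo (hC : IsAllocation C) {δ : Fin n} (hδ : δ ≠ α) (heδ : e ∈ C δ) :
    IsTransfer (fun j => (C j).card) (fun j => (giveTo C α e j).card) α δ := by
  have heα : e ∉ C α := Finset.disjoint_left.1 (hC δ α hδ) heδ
  refine ⟨by simp [heα], ?_, fun j hjα hjδ => ?_⟩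
  · simp [giveTo_of_ne hδ, Finset.card_erase_add_one heδ]
  · have hej : e ∉ C j := Finset.disjoint_left.1 (hC δ j (Ne.symm hjδ)) heδ
    simp only [giveTo_of_ne hjα, Finset.erase_eq_of_notMem hej]

end giveTo

end Allocation

section Exchange

variable {n m : ℕ}

def allocDist (C D : Fin n → Finset (Fin m)) : ℕ :=
  ∑ j, (C j ∆ D j).card

lemma allocDist_comm (C D : Fin n → Finset (Fin m)) : allocDist C D = allocDist D C := by
  simp only [allocDist, symmDiff_comm]

def StepToward (C C' D : Fin n → Finset (Fin m)) (α : Fin n) : Prop :=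
  (∀ j, C' j ∆ D j ⊆ C j ∆ D j) ∧ C' α ∆ D α ⊂ C α ∆ D α

namespace StepToward

variable {C C' C'' D : Fin n → Finset (Fin m)} {α : Fin n}

lemma allocDist_lt (h : StepToward C C' D α) : allocDist C' D < allocDist C D :=
  Finset.sum_lt_sum (fun j _ => Finset.card_le_card (h.1 j))
    ⟨α, Finset.mem_univ α, Finset.card_lt_card h.2⟩

lemma trans (h : StepToward C C' D α) (h' : ∀ j, C'' j ∆ D j ⊆ C' j ∆ D j) :
    StepToward C C'' D α :=
  ⟨fun j => (h' j).trans (h.1 j), (h' α).trans_ssubset h.2⟩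

lemma update (h : StepToward C C' D α) {i : Fin n} (hα : α ≠ i) (Y : Finset (Fin m)) :
    StepToward (Function.update C i Y) (Function.update C' i Y) D α := by
  refine ⟨fun j => ?_, by simpa [Function.update_of_ne hα] using h.2⟩
  by_cases hj : j = i
  · subst hj; simp
  · simpa [Function.update_of_ne hj] using h.1 j

lemma eq_of_card_eq (h : StepToward C C' D α) {j : Fin n} (hDC : D j ⊆ C j)
    (hcard : (C' j).card = (C j).card) : C' j = C j := by
  refine Finset.eq_of_subset_of_card_le (fun x hx => ?_) hcard.ge
  by_cases hxD : x ∈ D j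
  · exact hDC hxD
  · have := h.1 j (Finset.mem_symmDiff.2 (Or.inl ⟨hx, hxD⟩))
    exact (Finset.mem_symmDiff.1 this).resolve_right (fun h => hxD h.1) |>.1

end StepToward

lemma stepToward_giveTo {C D : Fin n → Finset (Fin m)} (hDa : IsAllocation D) {α : Fin n}
    {e : Fin m} (heD : e ∈ D α) (heC : e ∉ C α) : StepToward C (giveTo C α e) D α := by
  have hα : giveTo C α e α ∆ D α ⊆ C α ∆ D α := by
    intro x
    simp only [giveTo_self, Finset.mem_symmDiff, Finset.mem_insert]
    grind
  refine ⟨fun j => ?_, (Finset.ssubset_iff_of_subset hα).2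
    ⟨e, by simp [Finset.mem_symmDiff, heD, heC], by simp [Finset.mem_symmDiff, heD]⟩⟩
  by_cases hj : j = α
  · exact hj ▸ hα
  have heDj : e ∉ D j := Finset.disjoint_left.1 (hDa α j (Ne.symm hj)) heD
  intro x
  simp only [giveTo_of_ne hj, Finset.mem_symmDiff, Finset.mem_erase]
  grind

/-- Augmenting path: `α` takes a good `e ∈ D α` that keeps its bundle independent; if `e` had an
owner `δ` that is then short of `|D δ|`, the path continues from `δ`. -/
theorem exists_stepToward {Q : Fin n → Matroidal m} {C D : Fin n → Finset (Fin m)}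
    (hCa : IsAllocation C) (hCc : Clean Q C) (hDa : IsAllocation D) (hDc : Clean Q D)
    {α : Fin n} (hlt : (C α).card < (D α).card) :
    ∃ C', IsAllocation C' ∧ Clean Q C' ∧ StepToward C C' D α ∧
      (∑ j, (C' j).card = ∑ j, (C j).card + 1 ∨
        ∃ β, (D β).card < (C β).card ∧
          IsTransfer (fun j => (C j).card) (fun j => (C' j).card) α β) := by
  induction hd : allocDist C D using Nat.strong_induction_on generalizing C α with
  | _ d ih =>
  obtain ⟨e, heD, heC, hind⟩ := (hCc.indep α).exists_insert_of_card_lt (hDc.indep α) hlt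
  have hstep := stepToward_giveTo (C := C) hDa heD heC
  have hC1a := hCa.giveTo (α := α) (e := e)
  have hC1c := hCc.giveTo hind
  by_cases hfree : ∀ j, e ∉ C j
  · exact ⟨_, hC1a, hC1c, hstep, Or.inl (sum_card_giveTo hfree)⟩
  push Not at hfree
  obtain ⟨δ, heδ⟩ := hfree
  have hδα : δ ≠ α := by rintro rfl; exact heC heδ
  have htr := isTransfer_giveTo hCa hδα heδ
  by_cases hδ : (D δ).card < (C δ).card
  · exact ⟨_, hC1a, hC1c, hstep, Or.inr ⟨δ, hδ, htr⟩⟩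
  have hlt' : (giveTo C α e δ).card < (D δ).card := by have := htr.apply_right; omega
  obtain ⟨C', hC'a, hC'c, hstep', hC'⟩ :=
    ih _ (hd ▸ hstep.allocDist_lt) hC1a hC1c hlt' rfl
  refine ⟨C', hC'a, hC'c, hstep.trans hstep'.1, ?_⟩
  rcases hC' with hsum | ⟨β, hβ, htr'⟩
  · exact Or.inl (by rw [hsum, htr.sum_eq])
  · have hβα : β ≠ α := by rintro rfl; have := htr.apply_left; omega
    have hβC : (giveTo C α e β).card = (C β).card := htr.apply_of_ne hβα htr'.ne.symm
    exact Or.inr ⟨β, hβC ▸ hβ, htr.trans htr' (Ne.symm hβα)⟩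

end Exchange

section LorenzDominating

variable {n m : ℕ} {Q : Fin n → Matroidal m} {C D : Fin n → Finset (Fin m)}

lemma kSmallestSum_card_le_of_mem_cLD (hD : D ∈ cLD Q) (hCa : IsAllocation C)
    (hCc : Clean Q C) {k : ℕ} (hk : k ≤ n) :
    kSmallestSum (fun j => (C j).card) k ≤ kSmallestSum (fun j => (D j).card) k := by
  have h := hD.2.2 C hCa k hk
  rwa [show (fun j => (Q j).v (C j)) = _ from funext hCc,
    show (fun j => (Q j).v (D j)) = _ from funext hD.1] at h

lemma sum_card_le_of_mem_cLD (hD : D ∈ cLD Q) (hCa : IsAllocation C) (hCc : Clean Q C) :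
    ∑ j, (C j).card ≤ ∑ j, (D j).card := by
  simpa only [kSmallestSum_self] using kSmallestSum_card_le_of_mem_cLD hD hCa hCc le_rfl

lemma card_le_add_one_of_isTransfer (hD : D ∈ cLD Q) (hCa : IsAllocation C) (hCc : Clean Q C)
    {a b : Fin n} (h : IsTransfer (fun j => (D j).card) (fun j => (C j).card) a b) :
    (D b).card ≤ (D a).card + 1 := by
  by_contra! hgap
  obtain ⟨k, hk, hlt⟩ := h.exists_kSmallestSum_lt hgap
  exact (kSmallestSum_card_le_of_mem_cLD hD hCa hCc hk).not_gt hlt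

lemma mem_cLD_of_card_eq_comp (hD : D ∈ cLD Q) (hCa : IsAllocation C) (hCc : Clean Q C)
    (σ : Equiv.Perm (Fin n)) (h : ∀ j, (C j).card = (D (σ j)).card) : C ∈ cLD Q := by
  refine ⟨hCc, hCa, fun B hB k hk => ?_⟩
  have hC : (fun j => (Q j).v (C j)) = (fun j => (Q j).v (D j)) ∘ σ := by
    funext j; simp [hCc j, hD.1 (σ j), h j]
  rw [hC, kSmallestSum_comp_perm]
  exact hD.2.2 B hB k hk

lemma sup_card_eq_of_mem_cLD (hC : C ∈ cLD Q) (hD : D ∈ cLD Q) (hn : 0 < n) :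
    Finset.univ.sup (fun j => (C j).card) = Finset.univ.sup (fun j => (D j).card) := by
  have := sum_card_le_of_mem_cLD hC hD.2.1 hD.1
  have := sum_card_le_of_mem_cLD hD hC.2.1 hC.1
  have := kSmallestSum_card_le_of_mem_cLD hC hD.2.1 hD.1 (Nat.sub_le n 1)
  have := kSmallestSum_card_le_of_mem_cLD hD hC.2.1 hC.1 (Nat.sub_le n 1)
  have := kSmallestSum_pred_add_sup (fun j => (C j).card) hn
  have := kSmallestSum_pred_add_sup (fun j => (D j).card) hn
  omega

/-- A transfer from `β` to `α` with `|C β| ≥ |C α| + 2` would raise a prefix sum of the sorted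
sizes, and one with `|C β| = |C α| + 1` only swaps two sizes. -/
theorem exists_step_of_mem_cLD (hC : C ∈ cLD Q) (hDa : IsAllocation D) (hDc : Clean Q D)
    {α : Fin n} (hlt : (C α).card < (D α).card) :
    ∃ β ≠ α, (D β).card < (C β).card ∧
      ((C β).card ≤ (C α).card ∨
        (C β).card = (C α).card + 1 ∧ ∃ C' ∈ cLD Q,
          (∀ j, (C' j).card = (C (Equiv.swap α β j)).card) ∧ StepToward C C' D α) := by
  obtain ⟨C', hC'a, hC'c, hstep, hsum | ⟨β, hβ, htr⟩⟩ :=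
    exists_stepToward hC.2.1 hC.1 hDa hDc hlt
  · have := sum_card_le_of_mem_cLD hC hC'a hC'c
    omega
  refine ⟨β, htr.ne.symm, hβ, ?_⟩
  have hle := card_le_add_one_of_isTransfer hC hC'a hC'c htr
  rcases Nat.lt_or_eq_of_le hle with hlt' | heq
  · exact Or.inl (by omega)
  · have hcomp := htr.eq_comp_swap heq
    have hcard : ∀ j, (C' j).card = (C (Equiv.swap α β j)).card := fun j => congrFun hcomp j
    exact Or.inr ⟨heq, C', mem_cLD_of_card_eq_comp hC hC'a hC'c _ hcard, hcard, hstep⟩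

end LorenzDominating

section Descent

variable {n m : ℕ}

def CardsPermFixing (i : Fin n) (C C' : Fin n → Finset (Fin m)) : Prop :=
  ∃ σ : Equiv.Perm (Fin n), σ i = i ∧ ∀ j, (C' j).card = (C (σ j)).card

namespace CardsPermFixing

variable {i : Fin n} {C C' : Fin n → Finset (Fin m)}

lemma refl (i : Fin n) (C : Fin n → Finset (Fin m)) : CardsPermFixing i C C :=
  ⟨1, rfl, fun _ => rfl⟩

lemma of_swap {a b : Fin n} (ha : a ≠ i) (hb : b ≠ i)
    (h : ∀ j, (C' j).card = (C (Equiv.swap a b j)).card) : CardsPermFixing i C C' :=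
  ⟨Equiv.swap a b, Equiv.swap_apply_of_ne_of_ne (Ne.symm ha) (Ne.symm hb), h⟩

lemma card_apply (h : CardsPermFixing i C C') : (C' i).card = (C i).card := by
  obtain ⟨σ, hσ, h⟩ := h
  rw [h, hσ]

lemma exists_lt_card {t : ℕ} (h : CardsPermFixing i C C') (ht : ∃ j, t < (C j).card) :
    ∃ j, t < (C' j).card := by
  obtain ⟨σ, -, h⟩ := h
  obtain ⟨j, hj⟩ := ht
  exact ⟨σ.symm j, by rwa [h, Equiv.apply_symm_apply]⟩

lemma card_le {t : ℕ} (h : CardsPermFixing i C C') (ht : ∀ j, (C j).card ≤ t) (j : Fin n) :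
    (C' j).card ≤ t := by
  obtain ⟨σ, -, h⟩ := h
  exact h j ▸ ht (σ j)

end CardsPermFixing

structure DescentStep (Q : Fin n → Matroidal m) (i : Fin n) (X : Finset (Fin m))
    (D1 D2 D1' D2' : Fin n → Finset (Fin m)) : Prop where
  mem_cLD_left : D1' ∈ cLD Q
  apply_left : D1' i = D1 i
  mem_cLD_right : D2' ∈ cLD (restrictProfile Q i X)
  cards_left : CardsPermFixing i D1 D1'
  cards_right : CardsPermFixing i D2 D2'
  allocDist_lt : allocDist (Function.update D1' i X) D2' < allocDist (Function.update D1 i X) D2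

variable {Q : Fin n → Matroidal m} {i : Fin n} {X : Finset (Fin m)} {W : ℕ}
  {D1 D2 : Fin n → Finset (Fin m)}

lemma descentStep_or_of_card_lt (hW : W ≤ (D1 i).card)
    (hmin : W < (D1 i).card ∨ ∀ E ∈ cLD Q, (D1 i).card ≤ (E i).card)
    (hD1 : D1 ∈ cLD Q) (hX : X ⊆ D1 i) (hD2 : D2 ∈ cLD (restrictProfile Q i X))
    {c : Fin n} (hci : c ≠ i) (hlt : (D1 c).card < (D2 c).card) (hcW : (D2 c).card ≤ W) :
    (∃ D1' D2', DescentStep Q i X D1 D2 D1' D2') ∨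
      ∃ γ ≠ i, (D2 γ).card < (D1 γ).card ∧ (D1 γ).card ≤ (D1 c).card := by
  have hD2c := clean_restrictProfile_iff.1 hD2.1
  obtain ⟨γ, hγc, hγ, hle | ⟨heq, C', hC', hcard, hstep⟩⟩ :=
    exists_step_of_mem_cLD hD1 hD2.2.1 hD2c.1 hlt
  · refine Or.inr ⟨γ, ?_, hγ, hle⟩
    rintro rfl
    omega
  have hγi : γ ≠ i := by
    rintro rfl
    have := hcard γ
    rw [Equiv.swap_apply_right] at this
    rcases hmin with hmin | hmin
    · omega
    · have := hmin C' hC'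
      omega
  have hC'i : C' i = D1 i := by
    refine hstep.eq_of_card_eq (hD2c.2.trans hX) ?_
    rw [hcard, Equiv.swap_apply_of_ne_of_ne (Ne.symm hci) (Ne.symm hγi)]
  exact Or.inl ⟨C', D2, hC', hC'i, hD2, .of_swap hci hγi hcard, .refl i D2,
    (hstep.update hci X).allocDist_lt⟩

lemma descentStep_or_of_card_gt (hD1 : D1 ∈ cLD Q) (hX : X ⊆ D1 i)
    (hD2 : D2 ∈ cLD (restrictProfile Q i X))
    {c : Fin n} (hci : c ≠ i) (hlt : (D2 c).card < (D1 c).card) :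
    (∃ D1' D2', DescentStep Q i X D1 D2 D1' D2') ∨
      ∃ l ≠ i, (D1 l).card < (D2 l).card ∧ (D2 l).card ≤ (D2 c).card := by
  have hB0a := hD1.2.1.update_of_subset hX
  have hB0c := hD1.1.update_restrictProfile hX
  have hupd : ∀ j ≠ i, Function.update D1 i X j = D1 j :=
    fun j hj => Function.update_of_ne hj _ _
  obtain ⟨l, hlc, hl, hbranch⟩ :=
    exists_step_of_mem_cLD hD2 hB0a hB0c (α := c) (by rwa [hupd c hci])
  have hli : l ≠ i := by
    rintro rfl
    have := Finset.card_le_card (clean_restrictProfile_iff.1 hD2.1).2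
    simp only [Function.update_self] at hl
    omega
  rw [hupd l hli] at hl
  rcases hbranch with hle | ⟨-, C', hC', hcard, hstep⟩
  · exact Or.inr ⟨l, hli, hl, hle⟩
  · refine Or.inl ⟨D1, C', hD1, rfl, hC', .refl i D1, .of_swap hci hli hcard, ?_⟩
    rw [allocDist_comm, allocDist_comm _ D2]
    exact hstep.allocDist_lt

/-- Alternately augmenting one allocation toward the other along a coordinate `c ≠ i` where
their sizes differ, the smaller of the two sizes at `c` decreases until a swap of sizes
occurs; when `i` would take part in the swap, `hmin` is contradicted. -/
theorem exists_descentStep (hW : W ≤ (D1 i).card)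
    (hmin : W < (D1 i).card ∨ ∀ E ∈ cLD Q, (D1 i).card ≤ (E i).card)
    (hD1 : D1 ∈ cLD Q) (hX : X ⊆ D1 i) (hD2 : D2 ∈ cLD (restrictProfile Q i X))
    {c : Fin n} (hci : c ≠ i) (hne : (D1 c).card ≠ (D2 c).card) (hcW : (D2 c).card ≤ W) :
    ∃ D1' D2', DescentStep Q i X D1 D2 D1' D2' := by
  induction hk : min (D1 c).card (D2 c).card using Nat.strong_induction_on generalizing c with
  | _ k ih =>
  rcases Nat.lt_or_gt_of_ne hne with hlt | hlt
  · obtain h | ⟨γ, hγi, hγ, hle⟩ := descentStep_or_of_card_lt hW hmin hD1 hX hD2 hci hlt hcW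
    · exact h
    · exact ih _ (by omega) hγi (by omega) (by omega) rfl
  · obtain h | ⟨l, hli, hl, hle⟩ := descentStep_or_of_card_gt hD1 hX hD2 hci hlt
    · exact h
    · exact ih _ (by omega) hli (by omega) (by omega) rfl

end Descent

section RestrictedProfile

variable {n m : ℕ} {P : Fin n → Matroidal m} {i : Fin n}

lemma minSize_le {B : Fin n → Finset (Fin m)} (hB : B ∈ cLD P) : minSize P i ≤ (B i).card :=
  Nat.sInf_le ⟨B, hB, rfl⟩

lemma minSize_eq_of_forall_le {B : Fin n → Finset (Fin m)} (hB : B ∈ cLD P)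
    (h : ∀ E ∈ cLD P, (B i).card ≤ (E i).card) : minSize P i = (B i).card :=
  le_antisymm (minSize_le hB)
    (le_csInf ⟨_, B, hB, rfl⟩ (by rintro _ ⟨E, hE, rfl⟩; exact h E hE))

variable {X : Finset (Fin m)}

theorem exists_mem_cLD_restrictProfile_apply_eq {A : Fin n → Finset (Fin m)} (hA : A ∈ cLD P)
    (hX : X ⊆ A i) {B : Fin n → Finset (Fin m)} (hB : B ∈ cLD (restrictProfile P i X)) :
    ∃ B' ∈ cLD (restrictProfile P i X), B' i = X := by
  induction hd : allocDist (Function.update A i X) B using Nat.strong_induction_on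
    generalizing A B with
  | _ d ih =>
  have hBX := (clean_restrictProfile_iff.1 hB.1).2
  by_cases hBi : X.card ≤ (B i).card
  · exact ⟨B, hB, Finset.eq_of_subset_of_card_le hBX hBi⟩
  have hXA := Finset.card_le_card hX
  obtain ⟨β, hβi, hβ, hle | ⟨-, C', hC', -, hstep⟩⟩ :=
    exists_step_of_mem_cLD hB (hA.2.1.update_of_subset hX) (hA.1.update_restrictProfile hX)
      (α := i) (by simpa using hBi)
  · rw [Function.update_of_ne hβi] at hβ
    obtain ⟨A', B', hstep⟩ := exists_descentStep (W := X.card - 1) (by omega)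
      (Or.inl (by omega)) hA hX hB hβi (by omega) (by omega)
    exact ih _ (hd ▸ hstep.allocDist_lt) hstep.mem_cLD_left (hstep.apply_left ▸ hX)
      hstep.mem_cLD_right rfl
  · refine ih _ ?_ hA hX hC' rfl
    rw [← hd, allocDist_comm, allocDist_comm _ B]
    exact hstep.allocDist_lt

theorem card_le_card_add_one_of_apply_eq {A B : Fin n → Finset (Fin m)}
    (hA : A ∈ cLD (restrictProfile P i X)) (hAi : A i = X)
    (hB : B ∈ cLD (restrictProfile P i X)) : X.card ≤ (B i).card + 1 := by
  induction hd : allocDist A B using Nat.strong_induction_on generalizing A B with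
  | _ d ih =>
  by_contra! hlt
  have hAX : (A i).card = X.card := by rw [hAi]
  obtain ⟨β, hβi, hβ, hbranch⟩ := exists_step_of_mem_cLD hB hA.2.1 hA.1 (α := i) (by omega)
  have hβB : (B β).card ≤ (B i).card + 1 := by omega
  rw [← restrictProfile_restrictProfile P i X] at hB
  obtain ⟨A', B', hstep⟩ := exists_descentStep (W := X.card - 1) (by omega) (Or.inl (by omega))
    hA hAi.ge hB hβi (by omega) (by omega)
  have hA'i : A' i = X := hstep.apply_left.trans hAi
  have hdist := hstep.allocDist_lt
  rw [Function.update_eq_self_iff.2 hA'i.symm, Function.update_eq_self_iff.2 hAi.symm, hd] at hdist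
  have := ih _ hdist hstep.mem_cLD_left hA'i
    (restrictProfile_restrictProfile P i X ▸ hstep.mem_cLD_right) rfl
  rw [hstep.cards_right.card_apply] at this
  omega

theorem card_le_card_add_one_of_mem_cLD {A B : Fin n → Finset (Fin m)} (hA : A ∈ cLD P)
    (hX : X ⊆ A i) (hB : B ∈ cLD (restrictProfile P i X)) : X.card ≤ (B i).card + 1 := by
  obtain ⟨As, hAs, hAsi⟩ := exists_mem_cLD_restrictProfile_apply_eq hA hX hB
  exact card_le_card_add_one_of_apply_eq hAs hAsi hB

/-- If `i` misses exactly one good `e` of `X`, then giving `e` to `i` takes it from an agent `β`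
with `|B β| ≤ |X|`; if `A` and `B` agree on `β`, one more augmenting path from there toward `A`
(with `i` holding `X`) ends at an agent `l ≠ i` with `|A l| < |B l| ≤ |X|`. -/
lemma exists_card_ne_of_card_add_one_eq {A B : Fin n → Finset (Fin m)} (hA : A ∈ cLD P)
    (hX : X ⊆ A i) (hB : B ∈ cLD (restrictProfile P i X)) (hBi : (B i).card + 1 = X.card) :
    ∃ c ≠ i, (A c).card ≠ (B c).card ∧ (B c).card ≤ X.card := by
  have hBX := (clean_restrictProfile_iff.1 hB.1).2
  obtain ⟨e, heX, heB⟩ :=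
    Finset.exists_mem_notMem_of_card_lt_card (s := B i) (t := X) (by omega)
  have hins : insert e (B i) ⊆ X := Finset.insert_subset heX hBX
  have hind : ((restrictProfile P i X) i).Indep (insert e (B i)) := by
    simpa using Matroidal.indep_restrict_iff.2 ⟨hins, (hA.1.indep i).subset (hins.trans hX)⟩
  have hCa := hB.2.1.giveTo (α := i) (e := e)
  have hCc := hB.1.giveTo hind
  by_cases hfree : ∀ j, e ∉ B j
  · have := sum_card_giveTo (α := i) hfree
    have := sum_card_le_of_mem_cLD hB hCa hCc
    omega
  push Not at hfree
  obtain ⟨β, heβ⟩ := hfree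
  have hβi : β ≠ i := by rintro rfl; exact heB heβ
  have htr := isTransfer_giveTo hB.2.1 hβi heβ
  have hβB := card_le_add_one_of_isTransfer hB hCa hCc htr
  by_cases hne : (A β).card ≠ (B β).card
  · exact ⟨β, hβi, hne, by omega⟩
  have hupd : ∀ j ≠ i, Function.update A i X j = A j := fun j hj => Function.update_of_ne hj _ _
  obtain ⟨C', hC'a, hC'c, -, hsum | ⟨l, hl, htr'⟩⟩ :=
    exists_stepToward hCa hCc (hA.2.1.update_of_subset hX) (hA.1.update_restrictProfile hX)
      (α := β) (by rw [hupd β hβi]; have := htr.apply_right; omega)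
  · have := sum_card_le_of_mem_cLD hB hC'a hC'c
    have := htr.sum_eq
    omega
  have hli : l ≠ i := by
    rintro rfl
    have := htr.apply_left
    simp only [Function.update_self] at hl
    omega
  have hlB := card_le_add_one_of_isTransfer hB hC'a hC'c (htr.trans htr' (Ne.symm hli))
  rw [hupd l hli, htr.apply_of_ne hli htr'.ne.symm] at hl
  exact ⟨l, hli, hl.ne, by omega⟩

theorem card_add_one_ne_of_card_eq_minSize {A B : Fin n → Finset (Fin m)} (hA : A ∈ cLD P)
    (hX : X ⊆ A i) (hmin : (A i).card = minSize P i) (hB : B ∈ cLD (restrictProfile P i X)) :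
    (B i).card + 1 ≠ X.card := by
  induction hd : allocDist (Function.update A i X) B using Nat.strong_induction_on
    generalizing A B with
  | _ d ih =>
  intro hBi
  obtain ⟨c, hci, hne, hcX⟩ := exists_card_ne_of_card_add_one_eq hA hX hB hBi
  obtain ⟨A', B', hstep⟩ := exists_descentStep (Finset.card_le_card hX)
    (Or.inr fun E hE => hmin ▸ minSize_le hE) hA hX hB hci hne hcX
  exact ih _ (hd ▸ hstep.allocDist_lt) hstep.mem_cLD_left (hstep.apply_left ▸ hX)
    (hstep.apply_left ▸ hmin) hstep.mem_cLD_right rfl (hstep.cards_right.card_apply ▸ hBi)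

theorem exists_card_gt_of_card_eq_minSize {A B : Fin n → Finset (Fin m)} (hA : A ∈ cLD P)
    (hX : X ⊆ A i) (hmin : (A i).card = minSize P i) (hrich : ∃ j, (A i).card < (A j).card)
    (hB : B ∈ cLD (restrictProfile P i X)) : ∃ j, X.card < (B j).card := by
  by_contra! hall
  induction hd : allocDist (Function.update A i X) B using Nat.strong_induction_on
    generalizing A B with
  | _ d ih =>
  obtain ⟨c, hc⟩ := hrich
  have hXA := Finset.card_le_card hX
  have := hall c
  obtain ⟨A', B', hstep⟩ := exists_descentStep hXA (Or.inr fun E hE => hmin ▸ minSize_le hE)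
    hA hX hB (c := c) (by rintro rfl; omega) (by omega) (hall c)
  have hA'i := hstep.apply_left
  exact ih _ (hd ▸ hstep.allocDist_lt) hstep.mem_cLD_left (hA'i ▸ hX) (hA'i ▸ hmin)
    (hA'i ▸ hstep.cards_left.exists_lt_card ⟨c, hc⟩) hstep.mem_cLD_right
    (hstep.cards_right.card_le hall) rfl

end RestrictedProfile

section Subsidy

variable {n m : ℕ} {P : Fin n → Matroidal m} {i : Fin n}

lemma sePay_le_one (P : Fin n → Matroidal m) (A : Fin n → Finset (Fin m)) (i : Fin n) :
    sePay P A i ≤ 1 := by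
  unfold sePay
  split_ifs <;> omega

lemma sePay_eq_one_iff {A : Fin n → Finset (Fin m)} : sePay P A i = 1 ↔
    (A i).card = minSize P i ∧ (A i).card < Finset.univ.sup (fun j => (A j).card) := by
  unfold sePay
  split_ifs with h
  exacts [iff_of_true rfl h, iff_of_false (by simp) h]

variable {X : Finset (Fin m)} {A B : Fin n → Finset (Fin m)}

lemma sePay_eq_zero_of_card_add_one_eq (hA : A ∈ cLD P) (hX : X ⊆ A i)
    (hB : B ∈ cLD (restrictProfile P i X)) (h : (B i).card + 1 = X.card) : sePay P A i = 0 := by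
  by_contra hp
  have hp : sePay P A i = 1 := by have := sePay_le_one P A i; omega
  exact card_add_one_ne_of_card_eq_minSize hA hX (sePay_eq_one_iff.1 hp).1 hB h

lemma sePay_restrictProfile_eq_one_of_card_add_one_eq (hA : A ∈ cLD P) (hX : X ⊆ A i)
    (hB : B ∈ cLD (restrictProfile P i X)) (h : (B i).card + 1 = X.card) :
    sePay (restrictProfile P i X) B i = 1 := by
  obtain ⟨As, hAs, hAsi⟩ := exists_mem_cLD_restrictProfile_apply_eq hA hX hB
  have hlow : ∀ E ∈ cLD (restrictProfile P i X), (B i).card ≤ (E i).card := fun E hE => by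
    have := card_le_card_add_one_of_apply_eq hAs hAsi hE
    omega
  refine sePay_eq_one_iff.2 ⟨(minSize_eq_of_forall_le hB hlow).symm, ?_⟩
  rw [← sup_card_eq_of_mem_cLD hAs hB i.pos]
  have := Finset.le_sup (f := fun j => (As j).card) (Finset.mem_univ i)
  simp only [hAsi] at this
  omega

lemma sePay_restrictProfile_eq_one_of_sePay_eq_one (hA : A ∈ cLD P) (hX : X ⊆ A i)
    (hp : sePay P A i = 1) (hB : B ∈ cLD (restrictProfile P i X)) (h : (B i).card = X.card) :
    sePay (restrictProfile P i X) B i = 1 := by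
  obtain ⟨hmin, hrich⟩ := sePay_eq_one_iff.1 hp
  have hlow : ∀ E ∈ cLD (restrictProfile P i X), (B i).card ≤ (E i).card := fun E hE => by
    have := card_le_card_add_one_of_mem_cLD hA hX hE
    have := card_add_one_ne_of_card_eq_minSize hA hX hmin hE
    omega
  refine sePay_eq_one_iff.2 ⟨(minSize_eq_of_forall_le hB hlow).symm, ?_⟩
  obtain ⟨j, -, hj⟩ := Finset.lt_sup_iff.1 hrich
  obtain ⟨l, hl⟩ := exists_card_gt_of_card_eq_minSize hA hX hmin ⟨j, hj⟩ hB
  exact Finset.lt_sup_iff.2 ⟨l, Finset.mem_univ l, by omega⟩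

end Subsidy

/-- Lemma 3.16: the SE mechanism is restricted-faithful. -/
theorem se_restricted_faithful {n m : ℕ} (P : Fin n → Matroidal m) (i : Fin n)
    (A : Fin n → Finset (Fin m)) (hA : A ∈ cLD P)
    (X : Finset (Fin m)) (hX : X ⊆ A i)
    (A'' : Fin n → Finset (Fin m))
    (hA'' : A'' ∈ cLD (Function.update P i ((P i).restrict X))) :
    (P i).v X + sePay P A i ≤
      (P i).v (A'' i) + sePay (Function.update P i ((P i).restrict X)) A'' i := by
  obtain ⟨hA''c, hA''X⟩ := clean_restrictProfile_iff.1 hA''.1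
  have hlow := card_le_card_add_one_of_mem_cLD hA hX hA''
  have hup := Finset.card_le_card hA''X
  have hvX : (P i).v X = X.card := (hA.1.indep i).subset hX
  rw [hvX, hA''c i]
  rcases (by omega : (A'' i).card + 1 = X.card ∨ (A'' i).card = X.card) with h | h
  · rw [sePay_eq_zero_of_card_add_one_eq hA hX hA'' h,
      sePay_restrictProfile_eq_one_of_card_add_one_eq hA hX hA'' h]
    omega
  · have := sePay_le_one P A i
    by_cases hp : sePay P A i = 1
    · rw [hp, sePay_restrictProfile_eq_one_of_sePay_eq_one hA hX hp hA'' h]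
      omega
    · omega
end

section
/- Let A be an allocation under a profile of matroidal valuations such that A is utilitarian optimal, and its envy graph G_A has neither a path of weight more than 1 nor a positive-weight cycle. Let i be an agent and e an unallocated item, and let A^{i,e} be the allocation obtained from A by adding e to A_i. If G_{A^{i,e}} has no positive-weight path ending at i, then G_{A^{i,e}} also has neither a path of weight more than 1 nor a positive-weight cycle, and A^{i,e} is utilitarian optimal. -/
open Finset

/-- The arc weight of the envy graph: `w(i,j) = v_i(A_j) − v_i(A_i)`. -/
def envyW {n m : ℕ} (P : Fin n → Matroidal m) (A : Fin n → Finset (Fin m))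
    (i j : Fin n) : ℤ :=
  ((P i).v (A j) : ℤ) - ((P i).v (A i) : ℤ)

/-- The weight of a walk, given as the list of its nodes. -/
def walkWeight {n : ℕ} (w : Fin n → Fin n → ℤ) : List (Fin n) → ℤ
  | [] => 0
  | [_] => 0
  | a :: b :: l => w a b + walkWeight w (b :: l)

/-!
Adding `e` to `A i` cannot lower anyone's value, so by utilitarian optimality nobody's value
changes: `A^{i,e}` is again optimal and only the arcs into `i` change weight. A path through `i`
splits at `i` into a prefix ending at `i`, of weight at most `0` by assumption, and a suffix
whose arcs do not enter `i`, of weight at most `1` as in `G_A`. Cycles are handled by optimality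
alone: rotating the bundles along a cycle gives another allocation, whose utility exceeds the
optimum by exactly the weight of the cycle.
-/

section WalkWeight

variable {n : ℕ} (w : Fin n → Fin n → ℤ)

theorem walkWeight_eq_sum_zipWith : ∀ l : List (Fin n),
    walkWeight w l = (List.zipWith w l l.tail).sum
  | [] => rfl
  | [_] => rfl
  | a :: b :: l => by
    rw [walkWeight, walkWeight_eq_sum_zipWith (b :: l)]
    rfl

theorem walkWeight_append_cons (x : Fin n) : ∀ l₁ l₂ : List (Fin n),
    walkWeight w (l₁ ++ x :: l₂) = walkWeight w (l₁ ++ [x]) + walkWeight w (x :: l₂)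
  | [], l₂ => by cases l₂ <;> simp [walkWeight]
  | [a], l₂ => by cases l₂ <;> simp [walkWeight]
  | a :: b :: l₁, l₂ => by
    have ih := walkWeight_append_cons x (b :: l₁) l₂
    simp only [List.cons_append, walkWeight] at ih ⊢
    rw [ih]
    ring

theorem walkWeight_congr {w₁ w₂ : Fin n → Fin n → ℤ} : ∀ l : List (Fin n),
    (∀ x, ∀ y ∈ l.tail, w₁ x y = w₂ x y) → walkWeight w₁ l = walkWeight w₂ l
  | [], _ => rfl
  | [_], _ => rfl
  | a :: b :: l, h => by
    rw [walkWeight, walkWeight, h a b (by simp),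
      walkWeight_congr (b :: l) fun x y hy => h x y (List.mem_of_mem_tail hy)]

theorem List.map_formPerm {α : Type*} [DecidableEq α] (l : List α) (hl : l.Nodup) :
    l.map l.formPerm = l.rotate 1 :=
  List.ext_getElem (by simp) fun k hk _ => by
    rw [List.getElem_map, List.formPerm_apply_getElem _ hl, List.getElem_rotate]

theorem walkWeight_cycle_eq_sum_formPerm (hw : ∀ j, w j j = 0) (a : Fin n) (l : List (Fin n))
    (hl : (a :: l).Nodup) :
    walkWeight w ((a :: l) ++ [a]) = ∑ j, w j ((a :: l).formPerm j) := by
  have hzip : List.zipWith w ((a :: l) ++ [a]) (l ++ [a]) =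
      List.zipWith w (a :: l) (l ++ [a]) := by
    rw [← List.append_nil (l ++ [a]), List.zipWith_append (by simp)]
    simp
  rw [walkWeight_eq_sum_zipWith, List.cons_append, List.tail_cons, ← List.cons_append, hzip,
    ← Finset.sum_subset (Finset.subset_univ (a :: l).toFinset) fun j _ hj => by
      rw [List.formPerm_apply_of_notMem (by simpa using hj), hw],
    List.sum_toFinset _ hl, ← List.rotate_zero (l ++ [a]), ← List.rotate_cons_succ,
    ← List.map_formPerm _ hl, List.zipWith_map_right, List.zipWith_self]

end WalkWeight

theorem walkWeight_le_one_of_eq_of_ne {n : ℕ} {w w' : Fin n → Fin n → ℤ} (i : Fin n)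
    (hw : ∀ j k, k ≠ i → w' j k = w j k)
    (hpath : ∀ l : List (Fin n), l.Nodup → walkWeight w l ≤ 1)
    (hend : ∀ l : List (Fin n), l.Nodup → l.getLast? = some i → walkWeight w' l ≤ 0)
    (l : List (Fin n)) (hl : l.Nodup) : walkWeight w' l ≤ 1 := by
  have hagree : ∀ l : List (Fin n), i ∉ l.tail → walkWeight w' l = walkWeight w l :=
    fun l hi => walkWeight_congr l fun x y hy => hw x y fun h => hi (h ▸ hy)
  by_cases hi : i ∈ l
  · obtain ⟨l₁, l₂, rfl⟩ := List.append_of_mem hi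
    have hprefix : walkWeight w' (l₁ ++ [i]) ≤ 0 :=
      hend _ (((List.singleton_sublist.mpr List.mem_cons_self).append_left l₁).nodup hl)
        List.getLast?_concat
    have hsuffix : (i :: l₂).Nodup := (List.sublist_append_right l₁ _).nodup hl
    rw [walkWeight_append_cons, hagree (i :: l₂) (List.nodup_cons.mp hsuffix).1]
    linarith [hpath _ hsuffix]
  · rw [hagree l fun h => hi (List.mem_of_mem_tail h)]
    exact hpath l hl

section Allocation

variable {n m : ℕ} {P : Fin n → Matroidal m} {A B : Fin n → Finset (Fin m)}

theorem IsAllocation.update_insert (hA : IsAllocation A) {e : Fin m} (he : ∀ j, e ∉ A j)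
    (i : Fin n) : IsAllocation (Function.update A i (insert e (A i))) := by
  intro p q hpq
  rcases eq_or_ne p i with rfl | hp
  · rw [Function.update_self, Function.update_of_ne hpq.symm]
    exact Finset.disjoint_insert_left.mpr ⟨he q, hA p q hpq⟩
  rcases eq_or_ne q i with rfl | hq
  · rw [Function.update_self, Function.update_of_ne hp]
    exact Finset.disjoint_insert_right.mpr ⟨he p, hA p q hpq⟩
  · rw [Function.update_of_ne hp, Function.update_of_ne hq]
    exact hA p q hpq

theorem IsAllocation.comp_perm (hA : IsAllocation A) (σ : Equiv.Perm (Fin n)) :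
    IsAllocation (A ∘ σ) :=
  fun _ _ hpq => hA _ _ (σ.injective.ne hpq)

theorem envyW_self (P : Fin n → Matroidal m) (A : Fin n → Finset (Fin m)) (j : Fin n) :
    envyW P A j j = 0 :=
  sub_self _

theorem UtilOpt.of_le (hA : UtilOpt P A) (hB : IsAllocation B)
    (hle : ∀ j, (P j).v (A j) ≤ (P j).v (B j)) :
    UtilOpt P B ∧ ∀ j, (P j).v (B j) = (P j).v (A j) := by
  have hsum : ∑ j, (P j).v (A j) = ∑ j, (P j).v (B j) :=
    le_antisymm (Finset.sum_le_sum fun j _ => hle j) (hA.2 B hB)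
  refine ⟨⟨hB, fun C hC => hsum ▸ hA.2 C hC⟩, fun j => ?_⟩
  exact ((Finset.sum_eq_sum_iff_of_le fun j _ => hle j).mp hsum j (Finset.mem_univ j)).symm

theorem UtilOpt.sum_envyW_perm_nonpos (hA : UtilOpt P A) (σ : Equiv.Perm (Fin n)) :
    ∑ j, envyW P A j (σ j) ≤ 0 := by
  have hle : ∑ j, (P j).v (A (σ j)) ≤ ∑ j, (P j).v (A j) := hA.2 _ (hA.1.comp_perm σ)
  simp only [envyW, Finset.sum_sub_distrib, sub_nonpos]
  exact_mod_cast hle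

theorem UtilOpt.walkWeight_cycle_nonpos (hA : UtilOpt P A) (a : Fin n) (l : List (Fin n))
    (hl : (a :: l).Nodup) : walkWeight (envyW P A) ((a :: l) ++ [a]) ≤ 0 := by
  rw [walkWeight_cycle_eq_sum_formPerm _ (envyW_self P A) a l hl]
  exact hA.sum_envyW_perm_nonpos _

end Allocation

theorem sec_step_preserves_invariants_general {n m : ℕ} (P : Fin n → Matroidal m)
    (A : Fin n → Finset (Fin m)) (hopt : UtilOpt P A)
    (hpath : ∀ l : List (Fin n), l.Nodup → walkWeight (envyW P A) l ≤ 1)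
    (i : Fin n) (e : Fin m) (he : ∀ j : Fin n, e ∉ A j)
    (A' : Fin n → Finset (Fin m)) (hA' : A' = Function.update A i (insert e (A i)))
    (hend : ∀ l : List (Fin n), l.Nodup → l.getLast? = some i →
      walkWeight (envyW P A') l ≤ 0) :
    (∀ l : List (Fin n), l.Nodup → walkWeight (envyW P A') l ≤ 1) ∧
    (∀ (a : Fin n) (l : List (Fin n)), (a :: l).Nodup →
      walkWeight (envyW P A') ((a :: l) ++ [a]) ≤ 0) ∧
    UtilOpt P A' := by
  subst hA'
  obtain ⟨hopt', hval⟩ := hopt.of_le (hopt.1.update_insert he i) fun j => by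
    rcases eq_or_ne j i with rfl | hj
    · exact (P j).mono (by simp)
    · rw [Function.update_of_ne hj]
  have hW : ∀ j k, k ≠ i →
      envyW P (Function.update A i (insert e (A i))) j k = envyW P A j k := fun j k hk => by
    rw [envyW, envyW, hval, Function.update_of_ne hk]
  exact ⟨walkWeight_le_one_of_eq_of_ne i hW hpath hend, hopt'.walkWeight_cycle_nonpos, hopt'⟩

/-- Lemma 3.20 (one update step of the SEC algorithm): if `A` is a utilitarian optimal
allocation whose envy graph has no path of weight more than 1 and no positive-weight
cycle, `e` is an unallocated item, and the envy graph of `A^{i,e}` has no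
positive-weight path ending at `i`, then `A^{i,e}` is utilitarian optimal and its envy
graph has no path of weight more than 1 and no positive-weight cycle. -/
theorem sec_step_preserves_invariants {n m : ℕ} (P : Fin n → Matroidal m)
    (A : Fin n → Finset (Fin m)) (hopt : UtilOpt P A)
    (hpath : ∀ l : List (Fin n), l.Nodup → walkWeight (envyW P A) l ≤ 1)
    (hcycle : ∀ (a : Fin n) (l : List (Fin n)), (a :: l).Nodup →
      walkWeight (envyW P A) ((a :: l) ++ [a]) ≤ 0)
    (i : Fin n) (e : Fin m) (he : ∀ j : Fin n, e ∉ A j)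
    (A' : Fin n → Finset (Fin m)) (hA' : A' = Function.update A i (insert e (A i)))
    (hend : ∀ l : List (Fin n), l.Nodup → l.getLast? = some i →
      walkWeight (envyW P A') l ≤ 0) :
    (∀ l : List (Fin n), l.Nodup → walkWeight (envyW P A') l ≤ 1) ∧
    (∀ (a : Fin n) (l : List (Fin n)), (a :: l).Nodup →
      walkWeight (envyW P A') ((a :: l) ++ [a]) ≤ 0) ∧
    UtilOpt P A' :=
  sec_step_preserves_invariants_general P A hopt hpath i e he A' hA' hend
end

section
/- For any ε > 0, any mechanism for additive valuations that is envy-free and utilitarian optimal must on some profile pay some agent a subsidy of at least m − ε, even when there are only two agents and every item's value is at most 1. Concretely: for the two-agent additive profile with v_1(X) = |X| and v_2(X) = (1 − ε/m)·|X| for every X ⊆ M, the unique utilitarian optimal allocation is A = (M, ∅), and every subsidy vector p making (A, p) envy-free satisfies p_2 ≥ m − ε. -/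
open Finset

/-- Theorem 4.2: for the two-agent additive profile `v₁(X) = |X|` and
`v₂(X) = (1 − ε/m)·|X|`, the unique utilitarian optimal allocation is `(M, ∅)`,
and any subsidy vector making it envy-free must pay agent 2 at least `m − ε`.
Hence any envy-free and utilitarian optimal mechanism requires a subsidy of
`m − ε`, even for two agents with additive valuations whose item values are
at most 1. -/
theorem envyFree_utilOpt_requires_subsidy_m_sub_eps (m : ℕ) (hm : 0 < m)
    (ε : ℝ) (hε : 0 < ε) (hεm : ε ≤ m)
    (v : Fin 2 → Finset (Fin m) → ℝ)
    (hv1 : ∀ X : Finset (Fin m), v 0 X = X.card)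
    (hv2 : ∀ X : Finset (Fin m), v 1 X = (1 - ε / m) * X.card)
    (Astar : Fin 2 → Finset (Fin m))
    (hAstar : Astar 0 = Finset.univ ∧ Astar 1 = ∅) :
    -- `(M, ∅)` is utilitarian optimal
    (IsAllocation Astar ∧
      ∀ B : Fin 2 → Finset (Fin m), IsAllocation B →
        ∑ i, v i (B i) ≤ ∑ i, v i (Astar i)) ∧
    -- it is the unique utilitarian optimal allocation
    (∀ B : Fin 2 → Finset (Fin m), IsAllocation B →
      (∀ C : Fin 2 → Finset (Fin m), IsAllocation C → ∑ i, v i (C i) ≤ ∑ i, v i (B i)) →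
      (B 0 = Finset.univ ∧ B 1 = ∅)) ∧
    -- any envy-free subsidy vector for it pays agent 2 at least m − ε
    (∀ p : Fin 2 → ℝ, (∀ i, 0 ≤ p i) →
      (∀ i j : Fin 2, v i (Astar j) + p j ≤ v i (Astar i) + p i) →
      (m : ℝ) - ε ≤ p 1) := by
  obtain ⟨hA0, hA1⟩ := hAstar
  have hmpos : (0:ℝ) < m := by exact_mod_cast hm
  have hcoef : (1 - ε / m) < 1 := by
    have : 0 < ε / m := div_pos hε hmpos
    linarith
  have hcoef0 : (0:ℝ) ≤ 1 - ε / m := by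
    have : ε / m ≤ 1 := (div_le_one hmpos).2 hεm
    linarith
  have hsumA : ∑ i, v i (Astar i) = m := by
    rw [Fin.sum_univ_two, hv1, hv2, hA0, hA1]
    simp
  have hcard : ∀ B : Fin 2 → Finset (Fin m), IsAllocation B →
      (B 0).card + (B 1).card ≤ m := by
    intro B hB
    have hd := hB 0 1 (by decide)
    calc (B 0).card + (B 1).card = (B 0 ∪ B 1).card := (card_union_of_disjoint hd).symm
      _ ≤ (Finset.univ : Finset (Fin m)).card := card_le_card (subset_univ _)
      _ = m := by simp
  have hopt : ∀ B : Fin 2 → Finset (Fin m), IsAllocation B →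
      ∑ i, v i (B i) ≤ ∑ i, v i (Astar i) := by
    intro B hB
    rw [hsumA, Fin.sum_univ_two, hv1, hv2]
    have h := hcard B hB
    have h' : ((B 0).card : ℝ) + (B 1).card ≤ m := by exact_mod_cast h
    have hb1 : (0:ℝ) ≤ (B 1).card := Nat.cast_nonneg _
    nlinarith
  refine ⟨⟨?_, hopt⟩, ?_, ?_⟩
  · intro i j hij
    fin_cases i <;> fin_cases j <;> simp_all [hA0, hA1]
  · intro B hB hBopt
    have hge := hBopt Astar (by
      intro i j hij
      fin_cases i <;> fin_cases j <;> simp_all [hA0, hA1])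
    rw [hsumA, Fin.sum_univ_two, hv1, hv2] at hge
    have h := hcard B hB
    have h' : ((B 0).card : ℝ) + (B 1).card ≤ m := by exact_mod_cast h
    have hb1 : (0:ℝ) ≤ (B 1).card := Nat.cast_nonneg _
    have hB1 : (B 1).card = 0 := by
      by_contra hne
      have : (1:ℝ) ≤ (B 1).card := by exact_mod_cast Nat.one_le_iff_ne_zero.2 hne
      have hεm' : 0 < ε / m := div_pos hε hmpos
      nlinarith
    have hB1' : B 1 = ∅ := card_eq_zero.mp hB1
    have hB0 : (m:ℝ) ≤ (B 0).card := by rw [hB1] at hge; simpa using hge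
    have hB0' : m ≤ (B 0).card := by exact_mod_cast hB0
    have : (B 0).card = m := le_antisymm (by simpa using card_le_card (subset_univ (B 0))) hB0'
    exact ⟨Finset.eq_univ_of_card _ (by rw [this]; simp), hB1'⟩
  · intro p hp hef
    have h := hef 1 0
    rw [hv2, hv2, hA0, hA1] at h
    simp only [card_univ, Fintype.card_fin, card_empty] at h
    have hp0 := hp 0
    have : (1 - ε / m) * m = m - ε := by field_simp
    nlinarith
end

section
/- There exist two agents with monotone valuations satisfying v_i(M) ≤ m such that every mechanism satisfying completeness and envy-freeness must pay some agent a subsidy of at least m on this profile. Concretely: for M={e_1,…,e_m} and the two agents with v_1(X) = v_2(X) = m if e_1 ∈ X and 0 otherwise, every complete allocation A and every subsidy vector p making (A,p) envy-free satisfy max(p_1, p_2) ≥ m. -/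
open Finset

/-- Theorem 5.2: for the two agents with the monotone valuations
`v₁(X) = v₂(X) = m` if `e₁ ∈ X` and `0` otherwise, every complete allocation together
with every envy-free subsidy vector pays some agent a subsidy of at least `m`.
Hence any complete and envy-free mechanism requires a subsidy of `m` for some agent. -/
theorem complete_envyFree_requires_subsidy_m (m : ℕ) (hm : 0 < m)
    (v : Fin 2 → Finset (Fin m) → ℝ)
    (hv : ∀ (i : Fin 2) (X : Finset (Fin m)),
      v i X = if (⟨0, hm⟩ : Fin m) ∈ X then (m : ℝ) else 0) :
    ∀ A : Fin 2 → Finset (Fin m), IsAllocation A →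
      -- completeness
      A 0 ∪ A 1 = Finset.univ →
      ∀ p : Fin 2 → ℝ, (∀ i, 0 ≤ p i) →
        -- envy-freeness
        (∀ i j : Fin 2, v i (A j) + p j ≤ v i (A i) + p i) →
        (m : ℝ) ≤ max (p 0) (p 1) := by
  intro A hA hcomp p hp hef
  have hmem : (⟨0, hm⟩ : Fin m) ∈ A 0 ∪ A 1 := by
    rw [hcomp]; exact mem_univ _
  have hdis := hA 0 1 (by decide)
  rcases mem_union.mp hmem with h0 | h1
  · have h1' : (⟨0, hm⟩ : Fin m) ∉ A 1 := fun h => (Finset.disjoint_left.mp hdis h0) h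
    have := hef 1 0
    rw [hv 1 (A 0), hv 1 (A 1), if_pos h0, if_neg h1'] at this
    have : (m : ℝ) ≤ p 1 := by linarith [hp 0]
    exact le_max_of_le_right this
  · have h0' : (⟨0, hm⟩ : Fin m) ∉ A 0 := fun h => (Finset.disjoint_left.mp hdis h) h1
    have := hef 0 1
    rw [hv 0 (A 0), hv 0 (A 1), if_pos h1, if_neg h0'] at this
    have : (m : ℝ) ≤ p 0 := by linarith [hp 1]
    exact le_max_of_le_left this
end

section
/- For any profile of matroidal valuations, there exists an allocation that is simultaneously complete, utilitarian optimal, and EFX (envy-free up to any good). -/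
open Finset

namespace MyAux

variable {n m : ℕ}


variable {m : ℕ}

/-- rank is at most cardinality -/
lemma v_le_card (w : Matroidal m) (X : Finset (Fin m)) : w.v X ≤ X.card := by
  induction X using Finset.induction_on with
  | empty => simp [w.v_empty]
  | @insert a s h ih =>
    calc w.v (insert a s) ≤ w.v s + 1 := w.marginal s a
    _ ≤ s.card + 1 := by omega
    _ = (insert a s).card := by rw [Finset.card_insert_of_notMem h]

/-- marginal gains are monotone decreasing: zero marginal persists to supersets -/
lemma zero_marg_superset (w : Matroidal m) {X Y : Finset (Fin m)} (hXY : X ⊆ Y) {r : Fin m}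
    (h : w.v (insert r X) = w.v X) : w.v (insert r Y) = w.v Y := by
  by_cases hrY : r ∈ Y
  · rw [Finset.insert_eq_self.mpr hrY]
  · have hsub := w.submodular (insert r X) Y
    have hu : insert r X ∪ Y = insert r Y := by
      rw [Finset.insert_union, Finset.union_eq_right.mpr hXY]
    have hi : (insert r X) ∩ Y = X := by
      ext a
      simp only [Finset.mem_inter, Finset.mem_insert]
      constructor
      · rintro ⟨(rfl | ha), haY⟩
        · exact absurd haY hrY
        · exact ha
      · intro ha; exact ⟨Or.inr ha, hXY ha⟩
    rw [hu, hi, h] at hsub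
    have h1 : w.v Y ≤ w.v (insert r Y) := w.mono (Finset.subset_insert _ _)
    omega

/-- if every element of S has zero marginal at X, then v (X ∪ S) = v X -/
lemma zero_marg_union (w : Matroidal m) (X : Finset (Fin m)) (S : Finset (Fin m))
    (h : ∀ e ∈ S, w.v (insert e X) = w.v X) : w.v (X ∪ S) = w.v X := by
  induction S using Finset.induction_on with
  | empty => simp
  | @insert a s hns ih =>
    have h1 : w.v (X ∪ s) = w.v X := ih (fun e he => h e (Finset.mem_insert_of_mem he))
    have h2 : w.v (insert a (X ∪ s)) = w.v (X ∪ s) :=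
      zero_marg_superset w Finset.subset_union_left (h a (Finset.mem_insert_self a s))
    calc w.v (X ∪ insert a s) = w.v (insert a (X ∪ s)) := by
            rw [Finset.union_insert]
    _ = w.v (X ∪ s) := h2
    _ = w.v X := h1

/-- augmentation: strict rank increase gives a single augmenting element -/
lemma augment (w : Matroidal m) {X S : Finset (Fin m)} (h : w.v X < w.v (X ∪ S)) :
    ∃ e ∈ S, e ∉ X ∧ w.v (insert e X) = w.v X + 1 := by
  by_contra hcon
  push_neg at hcon
  have hz : ∀ e ∈ S, w.v (insert e X) = w.v X := by
    intro e he
    by_cases heX : e ∈ X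
    · rw [Finset.insert_eq_self.mpr heX]
    · have h1 := w.marginal X e
      have h2 := w.mono (Finset.subset_insert e X)
      have h3 := hcon e he heX
      omega
  rw [zero_marg_union w X S hz] at h
  omega

lemma erase_ge (w : Matroidal m) (X : Finset (Fin m)) (e : Fin m) :
    w.v X ≤ w.v (X.erase e) + 1 := by
  by_cases heX : e ∈ X
  · have := w.marginal (X.erase e) e
    rwa [Finset.insert_erase heX] at this
  · rw [Finset.erase_eq_of_notMem heX]; omega

/-- a set all whose elements are "coloops" is independent -/
lemma indep_of_coloops (w : Matroidal m) (X : Finset (Fin m))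
    (h : ∀ e ∈ X, w.v (X.erase e) + 1 = w.v X) : w.v X = X.card := by
  induction X using Finset.strongInduction with
  | _ X ih =>
    rcases Finset.eq_empty_or_nonempty X with rfl | ⟨e, he⟩
    · simp [w.v_empty]
    · have hkey : ∀ f ∈ X.erase e, w.v ((X.erase e).erase f) + 1 = w.v (X.erase e) := by
        intro f hf
        have hfX : f ∈ X := Finset.mem_of_mem_erase hf
        have hfe : f ≠ e := Finset.ne_of_mem_erase hf
        have hsub := w.submodular (X.erase e) (X.erase f)
        have hu : X.erase e ∪ X.erase f = X := by
          ext a; simp only [Finset.mem_union, Finset.mem_erase]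
          constructor
          · rintro (⟨_, ha⟩ | ⟨_, ha⟩) <;> exact ha
          · intro ha
            by_cases hae : a = e
            · exact Or.inr ⟨hae ▸ (Ne.symm hfe), ha⟩
            · exact Or.inl ⟨hae, ha⟩
        have hi : X.erase e ∩ X.erase f = (X.erase e).erase f := by
          ext a; simp only [Finset.mem_inter, Finset.mem_erase]
          tauto
        rw [hu, hi] at hsub
        have h1 := h e he
        have h2 := h f hfX
        have h3 := erase_ge w (X.erase e) f
        omega
      have hee : w.v (X.erase e) = (X.erase e).card :=
        ih (X.erase e) (Finset.erase_ssubset he) hkey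
      have h1 := h e he
      have h2 := Finset.card_erase_of_mem he
      have h3 := Finset.card_pos.mpr ⟨e, he⟩
      omega

/-- any set contains a basis: an independent subset of the same rank -/
lemma exists_basis (w : Matroidal m) (X : Finset (Fin m)) :
    ∃ Y ⊆ X, w.v Y = Y.card ∧ w.v Y = w.v X := by
  induction X using Finset.strongInduction with
  | _ X ih =>
    by_cases h : ∃ e ∈ X, w.v (X.erase e) = w.v X
    · obtain ⟨e, he, hev⟩ := h
      obtain ⟨Y, hY1, hY2, hY3⟩ := ih (X.erase e) (Finset.erase_ssubset he)
      exact ⟨Y, hY1.trans (Finset.erase_subset e X), hY2, by rw [hY3, hev]⟩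
    · push_neg at h
      refine ⟨X, Finset.Subset.refl X, ?_, rfl⟩
      apply indep_of_coloops
      intro e he
      have h1 := erase_ge w X e
      have h2 := w.mono (Finset.erase_subset e X)
      have h3 := h e he
      omega

/-- Key lemma: in a utilitarian-optimal allocation, any unallocated good has a
"safe receiver": an agent whose bundle, after adding the good, is envied by nobody. -/
lemma exists_safe (hn : 0 < n) (P : Fin n → Matroidal m) (B : Fin n → Finset (Fin m))
    (hB : IsAllocation B)
    (hopt : ∀ C : Fin n → Finset (Fin m), IsAllocation C →
      ∑ i, (P i).v (C i) ≤ ∑ i, (P i).v (B i))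
    (r : Fin m) (hr : ∀ k, r ∉ B k) :
    ∃ k, ∀ i, i ≠ k → (P i).v (insert r (B k)) ≤ (P i).v (B i) := by
  classical
  by_contra hcon
  push_neg at hcon
  choose σ hσne hσgt using hcon
  -- pigeonhole gives a periodic point of σ
  set x0 : Fin n := ⟨0, hn⟩ with hx0
  have hcard : Fintype.card (Fin n) < Fintype.card (Fin (n + 1)) := by simp
  obtain ⟨t₁, t₂, htne, hteq⟩ :=
    Fintype.exists_ne_map_eq_of_card_lt (fun t : Fin (n + 1) => σ^[(t : ℕ)] x0) hcard
  obtain ⟨s, t, hst, hseq⟩ : ∃ s t : ℕ, s < t ∧ σ^[s] x0 = σ^[t] x0 := by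
    rcases lt_or_gt_of_ne (fun h => htne (Fin.ext h) : (t₁ : ℕ) ≠ (t₂ : ℕ)) with h | h
    · exact ⟨t₁, t₂, h, hteq⟩
    · exact ⟨t₂, t₁, h, hteq.symm⟩
  set z : Fin n := σ^[s] x0 with hz
  set q : ℕ := t - s with hqdef
  have hq : 0 < q := by omega
  have hzq : σ^[q] z = z := by
    rw [hz, ← Function.iterate_add_apply]
    have : q + s = t := by omega
    rw [this, ← hseq]
  -- iterates of z reduce mod q
  have hmul : ∀ a : ℕ, σ^[q * a] z = z := by
    intro a
    induction a with
    | zero => simp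
    | succ b ih =>
      have : q * (b + 1) = q * b + q := by ring
      rw [this, Function.iterate_add_apply, hzq, ih]
  have hmod : ∀ a : ℕ, σ^[a] z = σ^[a % q] z := by
    intro a
    conv_lhs => rw [← Nat.div_add_mod a q]
    rw [Nat.add_comm, Function.iterate_add_apply]
    congr 1
    exact hmul (a / q)
  -- the orbit
  set O : Finset (Fin n) := (Finset.range q).image (fun i => σ^[i] z) with hO
  have hmemO : ∀ a : ℕ, σ^[a] z ∈ O := by
    intro a
    rw [hmod a, hO]
    exact Finset.mem_image.mpr ⟨a % q, Finset.mem_range.mpr (Nat.mod_lt a hq), rfl⟩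
  have hzO : z ∈ O := by simpa using hmemO 0
  have hσzO : σ z ∈ O := by simpa using hmemO 1
  set τ : Fin n → Fin n := σ^[q - 1] with hτ
  have hστ : ∀ j ∈ O, σ (τ j) = j := by
    intro j hj
    rw [hO] at hj
    obtain ⟨i, _, rfl⟩ := Finset.mem_image.mp hj
    show σ^[1] (σ^[q-1] (σ^[i] z)) = σ^[i] z
    rw [← Function.iterate_add_apply, ← Function.iterate_add_apply]
    have : 1 + (q - 1) + i = i + q := by omega
    rw [this, Function.iterate_add_apply, hzq]
  have hτO : ∀ j ∈ O, τ j ∈ O := by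
    intro j hj
    rw [hO] at hj
    obtain ⟨i, _, rfl⟩ := Finset.mem_image.mp hj
    rw [hτ, ← Function.iterate_add_apply]
    exact hmemO _
  have hτσz : τ (σ z) = z := by
    show σ^[q-1] (σ^[1] z) = z
    rw [← Function.iterate_add_apply]
    have : q - 1 + 1 = q := by omega
    rw [this, hzq]
  have hτinj : ∀ j ∈ O, ∀ j' ∈ O, τ j = τ j' → j = j' := by
    intro j hj j' hj' h
    rw [← hστ j hj, ← hστ j' hj', h]
  -- the improved allocation
  set C : Fin n → Finset (Fin m) := fun j =>
    if j ∈ O then (if j = σ z then insert r (B (τ j)) else B (τ j)) else B j with hC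
  -- case description of C
  have hCof : ∀ j, (j ∉ O ∧ C j = B j) ∨ (j ∈ O ∧ j ≠ σ z ∧ C j = B (τ j)) ∨
      (j = σ z ∧ C j = insert r (B z)) := by
    intro j
    by_cases hj : j ∈ O
    · by_cases hjz : j = σ z
      · right; right
        refine ⟨hjz, ?_⟩
        subst hjz
        simp [hC, if_pos hj, hτσz]
      · right; left
        exact ⟨hj, hjz, by simp only [hC, if_pos hj, if_neg hjz]⟩
    · left; exact ⟨hj, by simp only [hC, if_neg hj]⟩
  -- each bundle of C is (up to r) a bundle of B, injectively
  have hrepinj : ∀ j ∈ O, ∀ j' ∈ O, j ≠ j' → τ j ≠ τ j' :=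
    fun j hj j' hj' hne h => hne (hτinj j hj j' hj' h)
  have hCalloc : IsAllocation C := by
    intro j j' hjj'
    rw [Finset.disjoint_left]
    intro a haj haj'
    -- describe membership
    have hdesc : ∀ jj, a ∈ C jj → a ≠ r →
        a ∈ B (if jj ∈ O then τ jj else jj) := by
      intro jj hajj har
      rcases hCof jj with ⟨h1, h2⟩ | ⟨h1, h2, h3⟩ | ⟨h1, h2⟩
      · rw [h2] at hajj; rw [if_neg h1]; exact hajj
      · rw [h3] at hajj; rw [if_pos h1]; exact hajj
      · rw [h2] at hajj
        rcases Finset.mem_insert.mp hajj with h | h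
        · exact absurd h har
        · have hjjO : jj ∈ O := h1 ▸ hσzO
          rw [if_pos hjjO, h1, hτσz]; exact h
    by_cases har : a = r
    · subst har
      have hronly : ∀ jj, a ∈ C jj → jj = σ z := by
        intro jj hajj
        rcases hCof jj with ⟨h1, h2⟩ | ⟨h1, h2, h3⟩ | ⟨h1, h2⟩
        · rw [h2] at hajj; exact absurd hajj (hr _)
        · rw [h3] at hajj; exact absurd hajj (hr _)
        · exact h1
      exact hjj' ((hronly j haj).trans (hronly j' haj').symm)
    · have h1 := hdesc j haj har
      have h2 := hdesc j' haj' har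
      have hne : (if j ∈ O then τ j else j) ≠ (if j' ∈ O then τ j' else j') := by
        by_cases hj : j ∈ O <;> by_cases hj' : j' ∈ O <;>
          simp only [hj, hj', if_true, if_false]
        · exact hrepinj j hj j' hj' hjj'
        · exact fun h => hj' (h ▸ hτO j hj)
        · exact fun h => hj (h ▸ hτO j' hj')
        · exact hjj'
      exact Finset.disjoint_left.mp (hB _ _ hne) h1 h2
  -- welfare comparison
  have hge : ∀ j, (P j).v (B j) ≤ (P j).v (C j) := by
    intro j
    rcases hCof j with ⟨h1, h2⟩ | ⟨h1, h2, h3⟩ | ⟨h1, h2⟩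
    · rw [h2]
    · rw [h3]
      have hgt := hσgt (τ j)
      have hmarg := (P (σ (τ j))).marginal (B (τ j)) r
      rw [hστ j h1] at hgt hmarg
      omega
    · rw [h2]
      subst h1
      exact le_of_lt (hσgt z)
  have hstrict : (P (σ z)).v (B (σ z)) < (P (σ z)).v (C (σ z)) := by
    rcases hCof (σ z) with ⟨h1, _⟩ | ⟨_, h2, _⟩ | ⟨_, h2⟩
    · exact absurd hσzO h1
    · exact absurd rfl h2
    · rw [h2]; exact hσgt z
  have hsum : ∑ i, (P i).v (B i) < ∑ i, (P i).v (C i) :=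
    Finset.sum_lt_sum (fun i _ => hge i) ⟨σ z, Finset.mem_univ _, hstrict⟩
  exact absurd (hopt C hCalloc) (by omega)

/-- split a sum over `Fin n` at one index -/
lemma sum_split_one (k : Fin n) (g : Fin n → ℕ) :
    ∑ l, g l = g k + ∑ l ∈ univ.erase k, g l :=
  (Finset.add_sum_erase _ g (mem_univ k)).symm

/-- completion: junk items can be added one by one, keeping the invariants -/
lemma complete_aux (hn : 0 < n) (P : Fin n → Matroidal m) (A : Fin n → Finset (Fin m)) :
    ∀ (d : ℕ) (B : Fin n → Finset (Fin m)),
      IsAllocation B →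
      (∀ C, IsAllocation C → ∑ i, (P i).v (C i) ≤ ∑ i, (P i).v (B i)) →
      (∀ k, (P k).v (B k) = (P k).v (A k)) →
      (∀ j, A j ≠ B j → ∀ i, i ≠ j → (P i).v (B j) ≤ (P i).v (A i)) →
      (Finset.univ.filter (fun e => ∀ k, e ∉ B k)).card = d →
      ∃ B', IsAllocation B' ∧ (∀ e, ∃ i, e ∈ B' i) ∧
        (∀ C, IsAllocation C → ∑ i, (P i).v (C i) ≤ ∑ i, (P i).v (B' i)) ∧
        (∀ k, (P k).v (B' k) = (P k).v (A k)) ∧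
        (∀ j, A j ≠ B' j → ∀ i, i ≠ j → (P i).v (B' j) ≤ (P i).v (A i)) := by
  intro d
  induction d with
  | zero =>
    intro B h1 h2 h3 h4 h5
    refine ⟨B, h1, ?_, h2, h3, h4⟩
    intro e
    by_contra hcon
    push_neg at hcon
    have hmem : e ∈ Finset.univ.filter (fun e => ∀ k, e ∉ B k) :=
      Finset.mem_filter.mpr ⟨mem_univ e, hcon⟩
    have := Finset.card_eq_zero.mp h5
    rw [this] at hmem
    exact absurd hmem (Finset.notMem_empty e)
  | succ d ih =>
    intro B h1 h2 h3 h4 h5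
    have hne : (Finset.univ.filter (fun e => ∀ k, e ∉ B k)).Nonempty := by
      rw [← Finset.card_pos, h5]; omega
    obtain ⟨r, hrmem⟩ := hne
    have hr : ∀ k, r ∉ B k := (Finset.mem_filter.mp hrmem).2
    obtain ⟨k, hk⟩ := exists_safe hn P B h1 h2 r hr
    classical
    set B' : Fin n → Finset (Fin m) := Function.update B k (insert r (B k)) with hB'
    have hB'k : B' k = insert r (B k) := Function.update_self k _ B
    have hB'l : ∀ l, l ≠ k → B' l = B l := fun l hl => Function.update_of_ne hl _ B
    have halloc' : IsAllocation B' := by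
      intro a b hab
      by_cases hak : a = k <;> by_cases hbk : b = k
      · exact absurd (hak.trans hbk.symm) hab
      · have hab' : k ≠ b := fun h => hab (hak.trans h)
        rw [hak, hB'k, hB'l b hbk, Finset.disjoint_insert_left]
        exact ⟨hr b, h1 k b hab'⟩
      · have hab' : a ≠ k := fun h => hab (h.trans hbk.symm)
        rw [hbk, hB'l a hak, hB'k, Finset.disjoint_insert_right]
        exact ⟨hr a, h1 a k hab'⟩
      · rw [hB'l a hak, hB'l b hbk]; exact h1 a b hab
    -- the added item has zero marginal value for k (from optimality)
    have hvk : (P k).v (B' k) = (P k).v (B k) := by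
      have hle := h2 B' halloc'
      have hsplit1 := sum_split_one k (fun l => (P l).v (B' l))
      have hsplit2 := sum_split_one k (fun l => (P l).v (B l))
      have hrest : ∑ l ∈ univ.erase k, (P l).v (B' l) = ∑ l ∈ univ.erase k, (P l).v (B l) :=
        Finset.sum_congr rfl (fun l hl => by rw [hB'l l (Finset.mem_erase.mp hl).1])
      have hmono : (P k).v (B k) ≤ (P k).v (B' k) := by
        rw [hB'k]; exact (P k).mono (Finset.subset_insert r (B k))
      omega
    have hW' : ∑ i, (P i).v (B' i) = ∑ i, (P i).v (B i) := by
      have hsplit1 := sum_split_one k (fun l => (P l).v (B' l))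
      have hsplit2 := sum_split_one k (fun l => (P l).v (B l))
      have hrest : ∑ l ∈ univ.erase k, (P l).v (B' l) = ∑ l ∈ univ.erase k, (P l).v (B l) :=
        Finset.sum_congr rfl (fun l hl => by rw [hB'l l (Finset.mem_erase.mp hl).1])
      omega
    have hopt' : ∀ C, IsAllocation C → ∑ i, (P i).v (C i) ≤ ∑ i, (P i).v (B' i) := by
      intro C hC; rw [hW']; exact h2 C hC
    have h3' : ∀ l, (P l).v (B' l) = (P l).v (A l) := by
      intro l
      by_cases hl : l = k
      · subst hl; rw [hvk]; exact h3 l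
      · rw [hB'l l hl]; exact h3 l
    have h4' : ∀ j, A j ≠ B' j → ∀ i, i ≠ j → (P i).v (B' j) ≤ (P i).v (A i) := by
      intro j hAj i hij
      by_cases hjk : j = k
      · subst hjk
        rw [hB'k]
        calc (P i).v (insert r (B j)) ≤ (P i).v (B i) := hk i hij
        _ = (P i).v (A i) := h3 i
      · rw [hB'l j hjk]
        rw [hB'l j hjk] at hAj
        exact h4 j hAj i hij
    have hcard' : (Finset.univ.filter (fun e => ∀ k', e ∉ B' k')).card = d := by
      have hset : Finset.univ.filter (fun e => ∀ k', e ∉ B' k') =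
          (Finset.univ.filter (fun e => ∀ k', e ∉ B k')).erase r := by
        ext e
        simp only [Finset.mem_filter, Finset.mem_erase, mem_univ, true_and]
        constructor
        · intro h
          have hek : e ∉ insert r (B k) := hB'k ▸ h k
          have her : e ≠ r := fun hre => hek (by rw [hre]; exact Finset.mem_insert_self r _)
          refine ⟨her, fun k' => ?_⟩
          by_cases hl : k' = k
          · subst hl
            exact fun hh => hek (Finset.mem_insert_of_mem hh)
          · rw [← hB'l k' hl]; exact h k'
        · rintro ⟨her, h⟩ k'
          by_cases hl : k' = k
          · subst hl
            rw [hB'k, Finset.mem_insert]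
            rintro (rfl | hh)
            · exact her rfl
            · exact h _ hh
          · rw [hB'l k' hl]; exact h k'
      rw [hset, Finset.card_erase_of_mem hrmem, h5]
      omega
    exact ih B' halloc' hopt' h3' h4' hcard'

/-- split a sum over `Fin n` at two distinct indices -/
lemma sum_split_two {i j : Fin n} (hij : i ≠ j) (g : Fin n → ℕ) :
    ∑ l, g l = g i + g j + ∑ l ∈ (univ.erase i).erase j, g l := by
  have h1 : ∑ l, g l = g i + ∑ l ∈ univ.erase i, g l :=
    (Finset.add_sum_erase _ g (mem_univ i)).symm
  have h2 : ∑ l ∈ univ.erase i, g l = g j + ∑ l ∈ (univ.erase i).erase j, g l :=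
    (Finset.add_sum_erase _ g (Finset.mem_erase.mpr ⟨Ne.symm hij, mem_univ j⟩)).symm
  omega


end MyAux

open MyAux in
/-- Corollary 3.22: for matroidal valuations there exists a complete allocation that
is utilitarian optimal and EFX. -/
theorem exists_complete_utilOpt_EFX {n m : ℕ} (hn : 0 < n) (P : Fin n → Matroidal m) :
    ∃ A : Fin n → Finset (Fin m),
      IsAllocation A ∧
      -- completeness: every item is allocated
      (∀ e : Fin m, ∃ i : Fin n, e ∈ A i) ∧
      UtilOpt P A ∧
      -- EFX: envy-freeness up to any good
      (∀ i j : Fin n, (P i).v (A j) ≤ (P i).v (A i) ∨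
        ∀ e ∈ A j, (P i).v ((A j).erase e) ≤ (P i).v (A i)) := by
  classical
  -- a welfare-maximal allocation
  obtain ⟨B₀, hB₀mem, hB₀max⟩ :=
    Finset.exists_max_image (univ.filter (fun C : Fin n → Finset (Fin m) => IsAllocation C))
      (fun C => ∑ i, (P i).v (C i))
      ⟨(fun _ => (∅ : Finset (Fin m))), Finset.mem_filter.mpr
        ⟨mem_univ _, fun i j _ => Finset.disjoint_empty_left _⟩⟩
  have hB₀alloc : IsAllocation B₀ := (Finset.mem_filter.mp hB₀mem).2
  have hmax : ∀ C : Fin n → Finset (Fin m), IsAllocation C →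
      ∑ i, (P i).v (C i) ≤ ∑ i, (P i).v (B₀ i) := by
    intro C hC
    exact hB₀max C (Finset.mem_filter.mpr ⟨mem_univ _, hC⟩)
  -- clean it
  choose bas hbas_sub hbas_ind hbas_val using fun k => exists_basis (P k) (B₀ k)
  have hA₁alloc : IsAllocation bas := fun i j hij =>
    Finset.disjoint_of_subset_left (hbas_sub i)
      (Finset.disjoint_of_subset_right (hbas_sub j) (hB₀alloc i j hij))
  have hA₁W : ∑ i, (P i).v (bas i) = ∑ i, (P i).v (B₀ i) :=
    Finset.sum_congr rfl (fun i _ => hbas_val i)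
  -- minimize the sum of squared bundle sizes among clean optimal allocations
  obtain ⟨A, hAmem, hAmin⟩ :=
    Finset.exists_min_image
      (univ.filter (fun C : Fin n → Finset (Fin m) =>
        IsAllocation C ∧ Clean P C ∧ ∑ i, (P i).v (C i) = ∑ i, (P i).v (B₀ i)))
      (fun C => ∑ i, ((C i).card) ^ 2)
      ⟨bas, Finset.mem_filter.mpr ⟨mem_univ _, hA₁alloc, (fun k => hbas_ind k), hA₁W⟩⟩
  obtain ⟨-, hAalloc, hAclean, hAW⟩ := Finset.mem_filter.mp hAmem
  have hopt : ∀ C : Fin n → Finset (Fin m), IsAllocation C →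
      ∑ i, (P i).v (C i) ≤ ∑ i, (P i).v (A i) := by
    intro C hC; rw [hAW]; exact hmax C hC
  -- size bound from the minimality of squared sizes
  have hsize : ∀ i j : Fin n, i ≠ j → (P i).v (A i) + 1 ≤ (P i).v (A j) →
      (A j).card ≤ (A i).card + 1 := by
    intro i j hij hgt
    have hmono : (P i).v (A j) ≤ (P i).v (A i ∪ A j) := (P i).mono Finset.subset_union_right
    have hlt : (P i).v (A i) < (P i).v (A i ∪ A j) := by omega
    obtain ⟨f, hfj, hfi, hf⟩ := augment (P i) hlt
    have hfnot : ∀ l, l ≠ j → f ∉ A l := fun l hl hfl =>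
      Finset.disjoint_left.mp (hAalloc l j hl) hfl hfj
    set A' : Fin n → Finset (Fin m) :=
      fun l => if l = i then insert f (A i) else if l = j then (A j).erase f else A l with hA'
    have hA'i : A' i = insert f (A i) := by simp [hA']
    have hA'j : A' j = (A j).erase f := by simp [hA', Ne.symm hij]
    have hA'l : ∀ l, l ≠ i → l ≠ j → A' l = A l := by
      intro l h1 h2; simp [hA', h1, h2]
    -- membership characterization
    have hmem' : ∀ (x : Fin m) (l : Fin n), x ∈ A' l → x ≠ f → x ∈ A l := by
      intro x l hx hxf
      by_cases hli : l = i
      · subst hli; rw [hA'i] at hx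
        rcases Finset.mem_insert.mp hx with h | h
        · exact absurd h hxf
        · exact h
      · by_cases hlj : l = j
        · subst hlj; rw [hA'j] at hx; exact Finset.mem_of_mem_erase hx
        · rwa [hA'l l hli hlj] at hx
    have hmemf : ∀ l : Fin n, f ∈ A' l → l = i := by
      intro l hx
      by_cases hli : l = i
      · exact hli
      · by_cases hlj : l = j
        · subst hlj; rw [hA'j] at hx; exact absurd hx (Finset.notMem_erase f _)
        · rw [hA'l l hli hlj] at hx; exact absurd hx (hfnot l hlj)
    have hA'alloc : IsAllocation A' := by
      intro a b hab
      rw [Finset.disjoint_left]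
      intro x hxa hxb
      by_cases hxf : x = f
      · subst hxf
        exact hab ((hmemf a hxa).trans (hmemf b hxb).symm)
      · exact Finset.disjoint_left.mp (hAalloc a b hab) (hmem' x a hxa hxf) (hmem' x b hxb hxf)
    have hcard_j : (A j).card = (A j).card - 1 + 1 := by
      have := Finset.card_pos.mpr ⟨f, hfj⟩; omega
    have hvj : (P j).v ((A j).erase f) = (A j).card - 1 := by
      have h1 := erase_ge (P j) (A j) f
      have h2 := v_le_card (P j) ((A j).erase f)
      have h3 := hAclean j
      have h4 := Finset.card_erase_of_mem hfj
      omega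
    have hclean' : Clean P A' := by
      intro l
      by_cases hli : l = i
      · rw [hli, hA'i, hf, hAclean i, Finset.card_insert_of_notMem hfi]
      · by_cases hlj : l = j
        · rw [hlj, hA'j, hvj, Finset.card_erase_of_mem hfj]
        · rw [hA'l l hli hlj]; exact hAclean l
    have hW' : ∑ l, (P l).v (A' l) = ∑ l, (P l).v (B₀ l) := by
      have hs1 := sum_split_two hij (fun l => (P l).v (A' l))
      have hs2 := sum_split_two hij (fun l => (P l).v (A l))
      have hrest : ∑ l ∈ (univ.erase i).erase j, (P l).v (A' l) =
          ∑ l ∈ (univ.erase i).erase j, (P l).v (A l) := by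
        refine Finset.sum_congr rfl (fun l hl => ?_)
        obtain ⟨hlj, hli, -⟩ : l ≠ j ∧ l ≠ i ∧ l ∈ univ := by
          have h := Finset.mem_erase.mp hl
          exact ⟨h.1, (Finset.mem_erase.mp h.2).1, (Finset.mem_erase.mp h.2).2⟩
        rw [hA'l l hli hlj]
      have hvi : (P i).v (A' i) = (P i).v (A i) + 1 := by rw [hA'i, hf]
      have hvj' : (P j).v (A' j) = (A j).card - 1 := by rw [hA'j, hvj]
      have hcj := hAclean j
      omega
    have hminle := hAmin A' (Finset.mem_filter.mpr ⟨mem_univ _, hA'alloc, hclean', hW'⟩)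
    -- extract the size inequality
    have hs1 := sum_split_two hij (fun l => ((A' l).card) ^ 2)
    have hs2 := sum_split_two hij (fun l => ((A l).card) ^ 2)
    have hrest : ∑ l ∈ (univ.erase i).erase j, ((A' l).card) ^ 2 =
        ∑ l ∈ (univ.erase i).erase j, ((A l).card) ^ 2 := by
      refine Finset.sum_congr rfl (fun l hl => ?_)
      have h := Finset.mem_erase.mp hl
      rw [hA'l l (Finset.mem_erase.mp h.2).1 h.1]
    have hci : (A' i).card = (A i).card + 1 := by
      rw [hA'i, Finset.card_insert_of_notMem hfi]
    have hcj : (A' j).card = (A j).card - 1 := by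
      rw [hA'j, Finset.card_erase_of_mem hfj]
    obtain ⟨c, hc⟩ : ∃ c, (A j).card = c + 1 := ⟨(A j).card - 1, by omega⟩
    have hkey : (A i).card ^ 2 + (c + 1) ^ 2 ≤ ((A i).card + 1) ^ 2 + c ^ 2 := by
      rw [hs1, hs2] at hminle
      rw [hrest] at hminle
      rw [hci, hcj, hc] at hminle
      have : c + 1 - 1 = c := by omega
      rw [this] at hminle
      omega
    nlinarith [hkey]
  -- the base EFX property of A
  have hbase : ∀ i j : Fin n, i ≠ j → (P i).v (A i) + 1 ≤ (P i).v (A j) →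
      ∀ e ∈ A j, (P i).v ((A j).erase e) ≤ (P i).v (A i) := by
    intro i j hij hgt e he
    have h1 := hsize i j hij hgt
    have h2 := v_le_card (P i) ((A j).erase e)
    have h3 := Finset.card_erase_of_mem he
    have h4 := Finset.card_pos.mpr ⟨e, he⟩
    have h5 := hAclean i
    have h6 := hAclean j
    -- v_i(A_j \ e) ≤ |A_j| - 1 ≤ |A_i| = v_i(A_i)
    omega
  -- complete the allocation
  obtain ⟨B, hBalloc, hBcomp, hBopt, hBval, hBenvy⟩ :=
    complete_aux hn P A _ A hAalloc hopt (fun k => rfl) (fun j hj => absurd rfl hj) rfl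
  refine ⟨B, hBalloc, hBcomp, ⟨hBalloc, hBopt⟩, ?_⟩
  intro i j
  by_cases hij : i = j
  · subst hij; exact Or.inl le_rfl
  · by_cases hAB : A j = B j
    · by_cases hle : (P i).v (B j) ≤ (P i).v (B i)
      · exact Or.inl hle
      · right
        intro e he
        rw [← hAB] at he ⊢
        rw [hBval i]
        rw [← hAB, hBval i] at hle
        exact hbase i j hij (by omega) e he
    · left
      calc (P i).v (B j) ≤ (P i).v (A i) := hBenvy j hAB i hij
      _ = (P i).v (B i) := (hBval i).symm
end
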